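/- arXiv:1607.00981 — 4 statements merged into one kernel-verified Lean document; each statement's English description precedes it below -/
import Mathlib

section
/- Consider the scalar equation x(n+1)=a_n x(n) where a_n=a for n≤−1 and a_n=b for n≥0, with 0<a≤b. For each δ>0, the change of variables given by F(n,δ)=∏_{j=0}^{n-1}(1+δcos²(j)/(j²+1))^{-1} for n≥1, F(0,δ)=1, and F(n,δ)=∏_{j=n}^{-1}(1+δcos²(j)/(j²+1)) for n≤−1, is bounded with bounded inverse on ℤ and transforms the equation into y(n+1)=a_n(1+b_n)y(n) with b_n=δcos²(n)/(1+n²), where |b_n|≤δ for all n. Hence this equation is contracted to the interval [a,b]. -/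
/-- The step coefficient sequence: a for n ≤ -1 and b for n ≥ 0. -/
noncomputable def stepSeq (a b : ℝ) (n : ℤ) : ℝ := if n ≤ -1 then a else b

/-- The perturbation sequence b_n = δ cos²(n)/(1+n²). -/
noncomputable def pertSeq (δ : ℝ) (n : ℤ) : ℝ := δ * (Real.cos n) ^ 2 / (1 + (n : ℝ) ^ 2)

/-- The transformation F(n,δ). -/
noncomputable def Fcontr (δ : ℝ) (n : ℤ) : ℝ :=
  if 0 ≤ n then
    ((List.range n.toNat).map (fun j => (1 + pertSeq δ (j : ℤ))⁻¹)).prod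
  else
    ((List.range (-n).toNat).map (fun j => 1 + pertSeq δ (n + (j : ℤ)))).prod

/- ### Auxiliary lemmas -/

lemma pert_nonneg (δ : ℝ) (hδ : 0 ≤ δ) (n : ℤ) : 0 ≤ pertSeq δ n := by
  unfold pertSeq; positivity

lemma pert_le (δ : ℝ) (hδ : 0 ≤ δ) (n : ℤ) : pertSeq δ n ≤ δ * (1 + (n : ℝ) ^ 2)⁻¹ := by
  unfold pertSeq
  rw [div_eq_mul_inv]
  have h1 : (0:ℝ) < 1 + (n:ℝ)^2 := by positivity
  have h2 : Real.cos n ^ 2 ≤ 1 := Real.cos_sq_le_one n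
  have h3 : δ * Real.cos n ^ 2 ≤ δ * 1 := by nlinarith
  nlinarith [inv_pos.mpr h1]

lemma pert_abs_le (δ : ℝ) (hδ : 0 ≤ δ) (n : ℤ) : |pertSeq δ n| ≤ δ := by
  rw [abs_of_nonneg (pert_nonneg δ hδ n)]
  have h1 : (0:ℝ) < 1 + (n:ℝ)^2 := by positivity
  have h2 : ((1:ℝ) + (n:ℝ)^2)⁻¹ ≤ 1 := by
    rw [inv_le_one_iff₀]; right; nlinarith
  have := pert_le δ hδ n
  nlinarith

lemma one_add_pert_pos (δ : ℝ) (hδ : 0 ≤ δ) (n : ℤ) : 0 < 1 + pertSeq δ n := by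
  have := pert_nonneg δ hδ n; linarith

lemma aux_pos_prod (δ : ℝ) (k : ℕ) :
    ((List.range k).map (fun j => (1 + pertSeq δ (j : ℤ))⁻¹)).prod
      = ∏ j ∈ Finset.range k, (1 + pertSeq δ (j : ℤ))⁻¹ := by
  induction k with
  | zero => simp
  | succ k ih =>
    rw [List.range_succ, Finset.prod_range_succ, ← ih]
    simp

lemma aux_neg_prod (δ : ℝ) (n : ℤ) (k : ℕ) :
    ((List.range k).map (fun j => 1 + pertSeq δ (n + (j : ℤ)))).prod
      = ∏ j ∈ Finset.range k, (1 + pertSeq δ (n + (j : ℤ))) := by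
  induction k with
  | zero => simp
  | succ k ih =>
    rw [List.range_succ, Finset.prod_range_succ, ← ih]
    simp

lemma Fcontr_nonneg_eq (δ : ℝ) (n : ℤ) (h : 0 ≤ n) :
    Fcontr δ n = ∏ j ∈ Finset.range n.toNat, (1 + pertSeq δ (j:ℤ))⁻¹ := by
  rw [Fcontr, if_pos h, aux_pos_prod]

lemma Fcontr_neg_eq (δ : ℝ) (n : ℤ) (h : n < 0) :
    Fcontr δ n = ∏ j ∈ Finset.range (-n).toNat, (1 + pertSeq δ (n + (j:ℤ))) := by
  rw [Fcontr, if_neg (by omega), aux_neg_prod]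

lemma Fcontr_pos (δ : ℝ) (hδ : 0 ≤ δ) (n : ℤ) : 0 < Fcontr δ n := by
  rcases le_or_gt 0 n with h | h
  · rw [Fcontr_nonneg_eq δ n h]
    exact Finset.prod_pos (fun j _ => inv_pos.2 (one_add_pert_pos δ hδ _))
  · rw [Fcontr_neg_eq δ n h]
    exact Finset.prod_pos (fun j _ => one_add_pert_pos δ hδ _)

lemma Fcontr_rec (δ : ℝ) (hδ : 0 ≤ δ) (n : ℤ) :
    Fcontr δ (n + 1) * (1 + pertSeq δ n) = Fcontr δ n := by
  rcases le_or_gt 0 n with h | h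
  · have h1 : (n+1).toNat = n.toNat + 1 := by omega
    rw [Fcontr_nonneg_eq δ (n+1) (by omega), Fcontr_nonneg_eq δ n h, h1,
      Finset.prod_range_succ]
    have hc : ((n.toNat : ℕ) : ℤ) = n := by omega
    rw [hc, mul_assoc, inv_mul_cancel₀ (ne_of_gt (one_add_pert_pos δ hδ n)), mul_one]
  · rcases eq_or_lt_of_le (show n + 1 ≤ 0 by omega) with h2 | h2
    · have hn : n = -1 := by omega
      subst hn
      norm_num
      rw [Fcontr_nonneg_eq δ 0 le_rfl, Fcontr_neg_eq δ (-1) (by norm_num)]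
      norm_num
    · have hm : (-n).toNat = (-(n+1)).toNat + 1 := by omega
      rw [Fcontr_neg_eq δ n h, Fcontr_neg_eq δ (n+1) (by omega), hm,
        Finset.prod_range_succ']
      have hcongr : ∀ j ∈ Finset.range (-(n+1)).toNat,
          (1 + pertSeq δ (n + ((j+1 : ℕ) : ℤ))) = 1 + pertSeq δ ((n+1) + (j:ℤ)) := by
        intro j hj
        congr 2
        push_cast; ring
      rw [Finset.prod_congr rfl hcongr]
      push_cast
      ring_nf

lemma sum_bound (k : ℕ) : ∑ j ∈ Finset.range k, ((1:ℝ) + (j:ℝ)^2)⁻¹ ≤ 4 - 3/((k:ℝ)+1) := by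
  induction k with
  | zero => norm_num
  | succ k ih =>
    rw [Finset.sum_range_succ]
    have hx : (k:ℝ) = 0 ∨ 1 ≤ (k:ℝ) := by
      rcases Nat.eq_zero_or_pos k with h | h
      · left; simp [h]
      · right; exact_mod_cast h
    have h1 : (0:ℝ) < (k:ℝ)+1 := by positivity
    have h2 : (0:ℝ) < (k:ℝ)+2 := by positivity
    have h3 : (0:ℝ) < 1 + (k:ℝ)^2 := by positivity
    have key : ((1:ℝ) + (k:ℝ)^2)⁻¹ ≤ 3/((k:ℝ)+1) - 3/((k:ℝ)+2) := by
      rw [div_sub_div _ _ (ne_of_gt h1) (ne_of_gt h2), inv_eq_one_div,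
        div_le_div_iff₀ h3 (by positivity)]
      rcases hx with h | h <;> nlinarith
    push_cast
    have he : (k:ℝ)+1+1 = (k:ℝ)+2 := by ring
    rw [he]
    linarith

lemma sum_bound' (k : ℕ) : ∑ j ∈ Finset.range k, ((1:ℝ) + (j:ℝ)^2)⁻¹ ≤ 4 := by
  have h : (0:ℝ) < 3/((k:ℝ)+1) := by positivity
  linarith [sum_bound k]

lemma prod_le_exp (δ : ℝ) (hδ : 0 ≤ δ) (k : ℕ) (g : ℕ → ℝ) (hg0 : ∀ j, 0 ≤ g j)
    (hg : ∀ j, g j ≤ δ * ((1:ℝ) + (j:ℝ)^2)⁻¹) :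
    ∏ j ∈ Finset.range k, (1 + g j) ≤ Real.exp (4*δ) := by
  calc ∏ j ∈ Finset.range k, (1 + g j) ≤ ∏ j ∈ Finset.range k, Real.exp (g j) := by
        apply Finset.prod_le_prod (fun j _ => by have := hg0 j; positivity)
          (fun j _ => by have := Real.add_one_le_exp (g j); linarith)
    _ = Real.exp (∑ j ∈ Finset.range k, g j) := (Real.exp_sum _ _).symm
    _ ≤ Real.exp (4*δ) := by
        apply Real.exp_le_exp.2
        calc ∑ j ∈ Finset.range k, g j ≤ ∑ j ∈ Finset.range k, δ * ((1:ℝ)+(j:ℝ)^2)⁻¹ :=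
              Finset.sum_le_sum (fun j _ => hg j)
          _ = δ * ∑ j ∈ Finset.range k, ((1:ℝ)+(j:ℝ)^2)⁻¹ := by rw [Finset.mul_sum]
          _ ≤ δ * 4 := mul_le_mul_of_nonneg_left (sum_bound' k) hδ
          _ = 4*δ := by ring

lemma pos_prod_le (δ : ℝ) (hδ : 0 ≤ δ) (k : ℕ) :
    ∏ j ∈ Finset.range k, (1 + pertSeq δ (j:ℤ)) ≤ Real.exp (4*δ) := by
  apply prod_le_exp δ hδ k _ (fun j => pert_nonneg δ hδ _)
  intro j
  have := pert_le δ hδ (j:ℤ)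
  push_cast at this ⊢
  linarith

lemma neg_prod_le (δ : ℝ) (hδ : 0 ≤ δ) (n : ℤ) (h : n < 0) :
    ∏ j ∈ Finset.range (-n).toNat, (1 + pertSeq δ (n + (j:ℤ))) ≤ Real.exp (4*δ) := by
  set k := (-n).toNat with hk
  have hnk : n = -(k:ℤ) := by omega
  rw [← Finset.prod_range_reflect]
  have heq : ∀ j ∈ Finset.range k,
      1 + pertSeq δ (n + ((k - 1 - j : ℕ) : ℤ)) = 1 + pertSeq δ (-(1 + (j:ℤ))) := by
    intro j hj
    rw [Finset.mem_range] at hj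
    congr 2
    have hc : ((k - 1 - j : ℕ) : ℤ) = (k:ℤ) - 1 - j := by omega
    rw [hc, hnk]; ring
  rw [Finset.prod_congr rfl heq]
  apply prod_le_exp δ hδ k (fun j => pertSeq δ (-(1 + (j:ℤ)))) (fun j => pert_nonneg δ hδ _)
  intro j
  have h1 := pert_le δ hδ (-(1 + (j:ℤ)))
  have h2 : δ * ((1:ℝ) + ((-(1 + (j:ℤ)) : ℤ) : ℝ)^2)⁻¹ ≤ δ * ((1:ℝ) + (j:ℝ)^2)⁻¹ := by
    apply mul_le_mul_of_nonneg_left _ hδ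
    apply inv_anti₀ (by positivity)
    push_cast; nlinarith [Nat.cast_nonneg (α := ℝ) j]
  linarith

lemma Fcontr_le (δ : ℝ) (hδ : 0 ≤ δ) (n : ℤ) : Fcontr δ n ≤ Real.exp (4*δ) := by
  rcases le_or_gt 0 n with h | h
  · rw [Fcontr_nonneg_eq δ n h]
    have h1 : ∏ j ∈ Finset.range n.toNat, (1 + pertSeq δ (j:ℤ))⁻¹ ≤ 1 := by
      apply Finset.prod_le_one (fun j _ => le_of_lt (inv_pos.2 (one_add_pert_pos δ hδ _)))
      intro j _
      rw [inv_le_one_iff₀]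
      right
      have := pert_nonneg δ hδ (j:ℤ); linarith
    have h2 : (1:ℝ) ≤ Real.exp (4*δ) := by
      rw [Real.one_le_exp_iff]; positivity
    linarith
  · rw [Fcontr_neg_eq δ n h]
    exact neg_prod_le δ hδ n h

lemma Fcontr_inv_le (δ : ℝ) (hδ : 0 ≤ δ) (n : ℤ) : (Fcontr δ n)⁻¹ ≤ Real.exp (4*δ) := by
  rcases le_or_gt 0 n with h | h
  · rw [Fcontr_nonneg_eq δ n h, ← Finset.prod_inv_distrib]
    simp only [inv_inv]
    exact pos_prod_le δ hδ n.toNat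
  · rw [Fcontr_neg_eq δ n h]
    have h1 : (1:ℝ) ≤ ∏ j ∈ Finset.range (-n).toNat, (1 + pertSeq δ (n + (j:ℤ))) := by
      calc (1:ℝ) = ∏ _j ∈ Finset.range (-n).toNat, (1:ℝ) := by simp
        _ ≤ ∏ j ∈ Finset.range (-n).toNat, (1 + pertSeq δ (n + (j:ℤ))) := by
            apply Finset.prod_le_prod (fun _ _ => zero_le_one)
            intro j _
            have := pert_nonneg δ hδ (n + (j:ℤ)); linarith
    have h2 : (∏ j ∈ Finset.range (-n).toNat, (1 + pertSeq δ (n + (j:ℤ))))⁻¹ ≤ 1 := by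
      rw [inv_le_one_iff₀]; right; exact h1
    have h3 : (1:ℝ) ≤ Real.exp (4*δ) := by
      rw [Real.one_le_exp_iff]; positivity
    linarith

/-- The explicit transformation F(n,δ) is bounded with bounded inverse and transforms
x(n+1) = aₙx(n) into y(n+1) = aₙ(1+bₙ)y(n) with |bₙ| ≤ δ; hence the step equation is
contracted to [a,b]. -/
theorem step_equation_contracted (a b : ℝ) (ha : 0 < a) (hab : a ≤ b)
    (δ : ℝ) (hδ : 0 < δ) :
    (∀ n, Fcontr δ n ≠ 0) ∧
    (∃ M : ℝ, ∀ n, |Fcontr δ n| ≤ M) ∧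
    (∃ M : ℝ, ∀ n, |(Fcontr δ n)⁻¹| ≤ M) ∧
    (∀ n, Fcontr δ (n + 1) * (stepSeq a b n * (1 + pertSeq δ n)) =
      stepSeq a b n * Fcontr δ n) ∧
    (∀ n, |pertSeq δ n| ≤ δ) ∧
    (∀ n, stepSeq a b n ∈ Set.Icc a b) ∧
    (∀ δ' : ℝ, 0 < δ' → ∃ c B F : ℤ → ℝ,
      (∀ n, c n ∈ Set.Icc a b) ∧ (∀ n, |B n| ≤ δ') ∧ (∀ n, F n ≠ 0) ∧
      (∃ M : ℝ, ∀ n, |F n| ≤ M) ∧ (∃ M : ℝ, ∀ n, |(F n)⁻¹| ≤ M) ∧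
      (∀ n, F (n + 1) * (c n * (1 + B n)) = stepSeq a b n * F n)) := by
  have main : ∀ δ₀ : ℝ, 0 < δ₀ →
      (∀ n, Fcontr δ₀ n ≠ 0) ∧
      (∃ M : ℝ, ∀ n, |Fcontr δ₀ n| ≤ M) ∧
      (∃ M : ℝ, ∀ n, |(Fcontr δ₀ n)⁻¹| ≤ M) ∧
      (∀ n, Fcontr δ₀ (n + 1) * (stepSeq a b n * (1 + pertSeq δ₀ n)) =
        stepSeq a b n * Fcontr δ₀ n) ∧
      (∀ n, |pertSeq δ₀ n| ≤ δ₀) := by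
    intro δ₀ hδ₀
    have hδ₀' : 0 ≤ δ₀ := le_of_lt hδ₀
    refine ⟨fun n => ne_of_gt (Fcontr_pos δ₀ hδ₀' n), ⟨Real.exp (4*δ₀), fun n => ?_⟩,
      ⟨Real.exp (4*δ₀), fun n => ?_⟩, fun n => ?_, fun n => pert_abs_le δ₀ hδ₀' n⟩
    · rw [abs_of_pos (Fcontr_pos δ₀ hδ₀' n)]
      exact Fcontr_le δ₀ hδ₀' n
    · rw [abs_of_pos (inv_pos.2 (Fcontr_pos δ₀ hδ₀' n))]
      exact Fcontr_inv_le δ₀ hδ₀' n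
    · have := Fcontr_rec δ₀ hδ₀' n
      calc Fcontr δ₀ (n + 1) * (stepSeq a b n * (1 + pertSeq δ₀ n))
          = stepSeq a b n * (Fcontr δ₀ (n + 1) * (1 + pertSeq δ₀ n)) := by ring
        _ = stepSeq a b n * Fcontr δ₀ n := by rw [this]
  obtain ⟨m1, m2, m3, m4, m5⟩ := main δ hδ
  refine ⟨m1, m2, m3, m4, m5, fun n => ?_, fun δ' hδ' => ?_⟩
  · unfold stepSeq
    split <;> constructor <;> linarith
  · obtain ⟨m1', m2', m3', m4', m5'⟩ := main δ' hδ'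
    refine ⟨stepSeq a b, pertSeq δ', Fcontr δ', fun n => ?_, m5', m1', m2', m3', m4'⟩
    unfold stepSeq
    split <;> constructor <;> linarith
end

section
/- For the scalar equation x(n+1)=a_n x(n) with a_n=a for n≤−1 and a_n=b for n≥0 (0<a≤b), the Sacker–Sell spectrum is exactly [a,b]. -/
noncomputable def fundS (a : ℤ → ℝ) (n : ℤ) : ℝ :=
  if 0 ≤ n then ((List.range n.toNat).map (fun j => a (j : ℤ))).prod
  else ((List.range (-n).toNat).map (fun j => (a (n + (j : ℤ)))⁻¹)).prod

def ExpDichS (a : ℤ → ℝ) : Prop :=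
  ∃ K ρ : ℝ, 1 ≤ K ∧ ρ ∈ Set.Ioo (0:ℝ) 1 ∧ ∃ p : ℝ, p * p = p ∧
    (∀ n k : ℤ, k ≤ n → |fundS a n * p * (fundS a k)⁻¹| ≤ K * ρ ^ (n - k)) ∧
    (∀ n k : ℤ, n ≤ k → |fundS a n * (1 - p) * (fundS a k)⁻¹| ≤ K * ρ ^ (k - n))

def SSpecS (a : ℤ → ℝ) : Set ℝ := {l | 0 < l ∧ ¬ ExpDichS (fun n => l⁻¹ * a n)}
lemma zpow_le_nonneg {x y : ℝ} (hx : 0 < x) (hxy : x ≤ y) {m : ℤ} (hm : 0 ≤ m) :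
    x ^ m ≤ y ^ m := by
  lift m to ℕ using hm
  simpa using pow_le_pow_left₀ hx.le hxy m

lemma zpow_le_nonpos {x y : ℝ} (hx : 0 < x) (hxy : x ≤ y) {m : ℤ} (hm : m ≤ 0) :
    y ^ m ≤ x ^ m := by
  have hy : 0 < y := hx.trans_le hxy
  have h1 : y⁻¹ ≤ x⁻¹ := inv_anti₀ hx hxy
  have h2 := zpow_le_nonneg (inv_pos.mpr hy) h1 (m := -m) (by omega)
  simpa [inv_zpow, zpow_neg] using h2

lemma bind_cast_eq_map (m : ℕ) :
    (do let a ← List.range m; pure ((a:ℤ))) = (List.range m).map (fun j : ℕ => (j:ℤ)) := by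
  induction (List.range m) with
  | nil => rfl
  | cons h t ih => simp_all [List.flatMap]

lemma fundS_step (a b l : ℝ) (n : ℤ) :
    fundS (fun m => l⁻¹ * stepSeq a b m) n
      = if 0 ≤ n then (b / l) ^ n else (a / l) ^ n := by
  unfold fundS
  split_ifs with h
  · rw [bind_cast_eq_map, List.map_map]
    have hx : ∀ x ∈ (List.range n.toNat).map
        ((fun j : ℤ => l⁻¹ * stepSeq a b j) ∘ (fun j : ℕ => (j:ℤ))), x = l⁻¹ * b := by
      intro x hx
      simp only [List.mem_map, List.mem_range, Function.comp] at hx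
      obtain ⟨j, _, rfl⟩ := hx
      have hj : ¬ ((j : ℤ) ≤ -1) := by omega
      simp [stepSeq, hj]
    rw [List.prod_eq_pow_card _ (l⁻¹ * b) hx, List.length_map, List.length_range]
    rw [show (b / l : ℝ) = l⁻¹ * b by ring, ← zpow_natCast, Int.toNat_of_nonneg h]
  · rw [bind_cast_eq_map, List.map_map]
    have hx : ∀ x ∈ (List.range (-n).toNat).map
        ((fun j : ℤ => (l⁻¹ * stepSeq a b (n + j))⁻¹) ∘ (fun j : ℕ => (j:ℤ))),
        x = (l⁻¹ * a)⁻¹ := by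
      intro x hx
      simp only [List.mem_map, List.mem_range, Function.comp] at hx
      obtain ⟨j, hj, rfl⟩ := hx
      have hj' : (n + (j : ℤ)) ≤ -1 := by omega
      simp [stepSeq, hj']
    rw [List.prod_eq_pow_card _ ((l⁻¹ * a)⁻¹) hx, List.length_map, List.length_range]
    rw [show ((l⁻¹ * a)⁻¹ : ℝ) = (a / l)⁻¹ by ring, inv_pow, ← zpow_natCast, ← zpow_neg]
    congr 1
    omega

lemma key_le {c d : ℝ} (hc : 0 < c) (hcd : c ≤ d) {k n : ℤ} (hk : k ≤ n) :
    (if 0 ≤ n then d ^ n else c ^ n) * (if 0 ≤ k then d ^ k else c ^ k)⁻¹ ≤ d ^ (n - k) := by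
  have hd : 0 < d := hc.trans_le hcd
  split_ifs with h1 h2 h2
  · rw [zpow_sub₀ hd.ne', div_eq_mul_inv]
  · calc d ^ n * (c ^ k)⁻¹ ≤ d ^ n * (d ^ k)⁻¹ := by
          have h := zpow_le_nonneg hc hcd (m := -k) (by omega)
          rw [zpow_neg, zpow_neg] at h
          exact mul_le_mul_of_nonneg_left h (zpow_pos hd _).le
      _ = d ^ (n - k) := by rw [zpow_sub₀ hd.ne', div_eq_mul_inv]
  · omega
  · calc c ^ n * (c ^ k)⁻¹ = c ^ (n - k) := by rw [zpow_sub₀ hc.ne', div_eq_mul_inv]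
      _ ≤ d ^ (n - k) := zpow_le_nonneg hc hcd (by omega)

lemma key_le' {c d : ℝ} (hc : 0 < c) (hcd : c ≤ d) {k n : ℤ} (hk : n ≤ k) :
    (if 0 ≤ n then d ^ n else c ^ n) * (if 0 ≤ k then d ^ k else c ^ k)⁻¹ ≤ c ^ (n - k) := by
  have hd : 0 < d := hc.trans_le hcd
  split_ifs with h1 h2 h2
  · calc d ^ n * (d ^ k)⁻¹ = d ^ (n - k) := by rw [zpow_sub₀ hd.ne', div_eq_mul_inv]
      _ ≤ c ^ (n - k) := zpow_le_nonpos hc hcd (by omega)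
  · omega
  · calc c ^ n * (d ^ k)⁻¹ ≤ c ^ n * (c ^ k)⁻¹ := by
          have h := zpow_le_nonpos hc hcd (m := -k) (by omega)
          rw [zpow_neg, zpow_neg] at h
          exact mul_le_mul_of_nonneg_left h (zpow_pos hc _).le
      _ = c ^ (n - k) := by rw [zpow_sub₀ hc.ne', div_eq_mul_inv]
  · rw [zpow_sub₀ hc.ne', div_eq_mul_inv]

/-- The Sacker--Sell spectrum of the step equation is exactly [a,b]. -/
theorem step_equation_spectrum (a b : ℝ) (ha : 0 < a) (hab : a ≤ b) :
    SSpecS (stepSeq a b) = Set.Icc a b := by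
  have hb : 0 < b := ha.trans_le hab
  ext l
  simp only [SSpecS, Set.mem_setOf_eq, Set.mem_Icc]
  constructor
  · rintro ⟨hl, hnd⟩
    by_contra hcon
    push_neg at hcon
    apply hnd
    rcases lt_or_ge l a with hla | hal
    · -- l < a : dichotomy with p = 0, ρ = l/a
      refine ⟨1, l / a, le_refl 1, ⟨by positivity, (div_lt_one ha).mpr hla⟩, 0, by ring,
        ?_, ?_⟩
      · intro n k hk
        rw [mul_zero, zero_mul, abs_zero, one_mul]
        exact (zpow_pos (by positivity) _).le
      · intro n k hnk
        rw [sub_zero, mul_one, fundS_step, fundS_step, one_mul]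
        have hΦn : (0:ℝ) < (if 0 ≤ n then (b/l) ^ n else (a/l) ^ n) := by
          split_ifs <;> exact zpow_pos (by positivity) _
        have hΦk : (0:ℝ) < (if 0 ≤ k then (b/l) ^ k else (a/l) ^ k) := by
          split_ifs <;> exact zpow_pos (by positivity) _
        rw [abs_of_pos (mul_pos hΦn (inv_pos.mpr hΦk))]
        have h := key_le' (c := a/l) (d := b/l) (by positivity)
          ((div_le_div_iff_of_pos_right hl).mpr hab) hnk
        calc _ ≤ (a/l) ^ (n - k) := h
          _ = (l/a) ^ (k - n) := by
            rw [← inv_div a l, inv_zpow, ← zpow_neg, neg_sub]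
    · have hbl : b < l := hcon hal
      -- b < l : dichotomy with p = 1, ρ = b/l
      refine ⟨1, b / l, le_refl 1, ⟨by positivity, (div_lt_one hl).mpr hbl⟩, 1, by ring,
        ?_, ?_⟩
      · intro n k hk
        rw [mul_one, fundS_step, fundS_step, one_mul]
        have hΦn : (0:ℝ) < (if 0 ≤ n then (b/l) ^ n else (a/l) ^ n) := by
          split_ifs <;> exact zpow_pos (by positivity) _
        have hΦk : (0:ℝ) < (if 0 ≤ k then (b/l) ^ k else (a/l) ^ k) := by
          split_ifs <;> exact zpow_pos (by positivity) _
        rw [abs_of_pos (mul_pos hΦn (inv_pos.mpr hΦk))]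
        exact key_le (c := a/l) (d := b/l) (by positivity)
          ((div_le_div_iff_of_pos_right hl).mpr hab) hk
      · intro n k hnk
        rw [sub_self, mul_zero, zero_mul, abs_zero, one_mul]
        exact (zpow_pos (by positivity) _).le
  · rintro ⟨hal, hlb⟩
    have hl : 0 < l := ha.trans_le hal
    refine ⟨hl, ?_⟩
    rintro ⟨K, ρ, hK, ⟨hρ0, hρ1⟩, p, hp, h1, h2⟩
    have hK0 : (0:ℝ) < K := lt_of_lt_of_le one_pos hK
    obtain ⟨N, hN⟩ : ∃ N : ℕ, ρ ^ N < K⁻¹ :=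
      exists_pow_lt_of_lt_one (by positivity) hρ1
    have hKρ : K * ρ ^ N < 1 := by
      calc K * ρ ^ N < K * K⁻¹ := by exact mul_lt_mul_of_pos_left hN hK0
        _ = 1 := mul_inv_cancel₀ hK0.ne'
    have hΦ0 : fundS (fun m => l⁻¹ * stepSeq a b m) 0 = 1 := by
      rw [fundS_step, if_pos le_rfl, zpow_zero]
    have hp01 : p = 0 ∨ p = 1 := by
      rcases mul_eq_zero.mp (show p * (p - 1) = 0 by
        rw [mul_sub, hp, mul_one, sub_self]) with h | h
      · exact Or.inl h
      · exact Or.inr (by linarith)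
    rcases hp01 with rfl | rfl
    · -- p = 0 : use backward estimate at n = -N, k = 0
      have h := h2 (-(N:ℤ)) 0 (by omega)
      rw [hΦ0, sub_zero, mul_one, inv_one, mul_one, zero_sub, neg_neg,
        zpow_natCast] at h
      have hval : (1:ℝ) ≤ fundS (fun m => l⁻¹ * stepSeq a b m) (-(N:ℤ)) := by
        rw [fundS_step]
        split_ifs with hcase
        · have : -((N:ℕ):ℤ) = 0 := by omega
          rw [this, zpow_zero]
        · rw [zpow_neg, ← inv_zpow, inv_div, zpow_natCast]
          exact one_le_pow₀ ((one_le_div ha).mpr hal)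
      have := le_trans (le_trans hval (le_abs_self _)) h
      linarith
    · -- p = 1 : use forward estimate at n = N, k = 0
      have h := h1 (N:ℤ) 0 (by positivity)
      rw [hΦ0, mul_one, inv_one, mul_one, sub_zero, zpow_natCast] at h
      have hval : (1:ℝ) ≤ fundS (fun m => l⁻¹ * stepSeq a b m) (N:ℤ) := by
        rw [fundS_step, if_pos (by positivity), zpow_natCast]
        exact one_le_pow₀ ((one_le_div hl).mpr hlb)
      have := le_trans (le_trans hval (le_abs_self _)) h
      linarith
end

section
/- Let c: ℤ→(0,∞) be bounded away from 0 and ∞, and let 0<a≤b and δ∈(0,2a) be such that the scalar equation u(n+1)=c(n)/(a−δ/2)·u(n) has an exponential dichotomy with projector 0 and rate θ∈(0,1), and s(n+1)=c(n)/(b+δ/2)·s(n) has an exponential dichotomy with constant K=1, projector 1 and rate θ. Then there exist sequences h(n)∈[a,b] and Δ(n) with |Δ(n)|≤δ/2 and constants 0<M₂<1<M₁ such that M₂ ≤ ∏_{j=0}^{n-1} c(j)/(h(j)+Δ(j)) ≤ M₁ for all n≥1 and M₂ ≤ ∏_{j=n}^{-1} (c(j)/(h(j)+Δ(j)))^{-1}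 ≤ M₁ for all n≤−1. -/
open Finset

section FundamentalSolution

variable {a : ℤ → ℝ}

-- In `fundS`, `List.range _` is coerced to a `List ℤ` through the list monad.
lemma fundS_of_nonneg {n : ℤ} (hn : 0 ≤ n) :
    fundS a n = ((List.range n.toNat).map fun j : ℕ => a j).prod := by
  simp only [fundS, if_pos hn, bind_pure_comp, List.map_eq_map, List.map_map]
  rfl

lemma fundS_of_nonpos {n : ℤ} (hn : n ≤ 0) :
    fundS a n = ((List.range (-n).toNat).map fun j : ℕ => (a (n + j))⁻¹).prod := by
  rcases hn.lt_or_eq with hn | rfl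
  · simp only [fundS, if_neg hn.not_ge, bind_pure_comp, List.map_eq_map, List.map_map]
    rfl
  · simp [fundS]

lemma fundS_succ {n : ℤ} (hn : a n ≠ 0) : fundS a (n + 1) = a n * fundS a n := by
  rcases le_or_gt 0 n with h0 | h0
  · have hk : (n + 1).toNat = n.toNat + 1 := by omega
    rw [fundS_of_nonneg (by omega), hk, List.prod_range_succ, fundS_of_nonneg h0,
      Int.toNat_of_nonneg h0, mul_comm]
  · have hk : (-n).toNat = (-(n + 1)).toNat + 1 := by omega
    rw [fundS_of_nonpos h0.le, hk, List.prod_range_succ', fundS_of_nonpos (by omega)]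
    simp only [Nat.cast_zero, add_zero, Nat.cast_succ, add_assoc, add_comm (1 : ℤ)]
    rw [mul_inv_cancel_left₀ hn]

lemma fundS_ne_zero (ha : ∀ j, a j ≠ 0) (n : ℤ) : fundS a n ≠ 0 := by
  unfold fundS
  split_ifs <;> exact List.prod_ne_zero (by simp [ha])

lemma fundS_eq_mul_prod_Ico (ha : ∀ j, a j ≠ 0) {m n : ℤ} (hmn : m ≤ n) :
    fundS a n = fundS a m * ∏ j ∈ Ico m n, a j := by
  induction n, hmn using Int.leInduction with
  | base => simp
  | succ n hmn ih =>
    rw [fundS_succ (ha n), ih, ← prod_Ico_mul_eq_prod_Ico_add_one hmn]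
    ring

lemma fundS_mul_inv_fundS (ha : ∀ j, a j ≠ 0) {m n : ℤ} (hmn : m ≤ n) :
    fundS a n * (fundS a m)⁻¹ = ∏ j ∈ Ico m n, a j := by
  rw [fundS_eq_mul_prod_Ico ha hmn, mul_comm (fundS a m),
    mul_inv_cancel_right₀ (fundS_ne_zero ha m)]

end FundamentalSolution

lemma abs_le_of_fundS_mul_inv_le {f : ℤ → ℝ} (hf : ∀ j, f j ≠ 0) {θ : ℝ}
    (hS : ∀ n k : ℤ, k ≤ n → |fundS f n * (fundS f k)⁻¹| ≤ θ ^ (n - k)) (k : ℤ) :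
    |f k| ≤ θ := by
  have := hS (k + 1) k (by omega)
  rwa [fundS_mul_inv_fundS hf (by omega), Ico_add_one_right_eq_Icc, Icc_self, prod_singleton,
    add_sub_cancel_left, zpow_one] at this

lemma inv_le_prod_Ico_of_fundS_mul_inv_le {g : ℤ → ℝ} (hg : ∀ j, 0 < g j) {K θ : ℝ}
    (hK : 0 < K) (hθ₀ : 0 < θ) (hθ₁ : θ ≤ 1)
    (hU : ∀ n k : ℤ, n ≤ k → |fundS g n * (fundS g k)⁻¹| ≤ K * θ ^ (k - n))
    {m n : ℤ} (hmn : m ≤ n) : K⁻¹ ≤ ∏ j ∈ Ico m n, g j := by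
  have hprod : 0 < ∏ j ∈ Ico m n, g j := prod_pos fun j _ ↦ hg j
  have hinv : fundS g m * (fundS g n)⁻¹ = (∏ j ∈ Ico m n, g j)⁻¹ := by
    rw [← fundS_mul_inv_fundS (fun j ↦ (hg j).ne') hmn, mul_inv, inv_inv, mul_comm]
  have hU' := hU m n hmn
  rw [hinv, abs_of_pos (inv_pos.2 hprod)] at hU'
  rw [inv_le_comm₀ hK hprod]
  exact hU'.trans (mul_le_of_le_one_right hK.le (zpow_le_one₀ hθ₀ hθ₁ (by omega)))

noncomputable def runMin (u : ℤ → ℝ) : ℕ → ℝ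
  | 0 => 1
  | k + 1 => min 1 (runMin u k * u k)

section RunMin

variable {u : ℤ → ℝ}

lemma runMin_pos (hu : ∀ j, 0 < u j) : ∀ k, 0 < runMin u k
  | 0 => one_pos
  | k + 1 => lt_min one_pos (mul_pos (runMin_pos hu k) (hu k))

lemma runMin_le_one : ∀ k, runMin u k ≤ 1
  | 0 => le_rfl
  | _ + 1 => min_le_left _ _

lemma runMin_succ_div_mem (hu : ∀ j, 0 < u j) (k : ℕ) :
    runMin u (k + 1) / runMin u k ∈ Set.Icc (min 1 (u k)) (u k) := by
  have hR := runMin_pos hu k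
  rw [Set.mem_Icc, le_div_iff₀ hR, div_le_iff₀ hR, runMin, min_mul_of_nonneg _ _ hR.le]
  constructor
  · exact min_le_min (by simpa using runMin_le_one k) (mul_comm _ _).le
  · exact (min_le_right _ _).trans (mul_comm _ _).le

lemma exists_runMin_eq_prod_Ico (u : ℤ → ℝ) :
    ∀ k : ℕ, ∃ m ≤ (k : ℤ), runMin u k = ∏ j ∈ Ico m k, u j
  | 0 => ⟨0, le_rfl, by simp [runMin]⟩
  | k + 1 => by
    obtain ⟨m, hmk, hm⟩ := exists_runMin_eq_prod_Ico u k
    push_cast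
    rcases min_choice 1 (runMin u k * u k) with h | h
    · exact ⟨k + 1, le_rfl, by simp [runMin, h]⟩
    · exact ⟨m, by omega, by
        rw [runMin, h, hm, prod_Ico_mul_eq_prod_Ico_add_one hmk]⟩

lemma le_runMin {L : ℝ} (hL : ∀ m n : ℤ, m ≤ n → L ≤ ∏ j ∈ Ico m n, u j) (k : ℕ) :
    L ≤ runMin u k := by
  obtain ⟨m, hmk, hm⟩ := exists_runMin_eq_prod_Ico u k
  exact hm ▸ hL m k hmk

end RunMin

lemma prod_Ico_comp_neg_sub_one {M : Type*} [CommMonoid M] (f : ℤ → M) (m n : ℤ) :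
    ∏ j ∈ Ico m n, f (-j - 1) = ∏ j ∈ Ico (-n) (-m), f j :=
  prod_nbij' (fun j ↦ -j - 1) (fun j ↦ -j - 1) (by intro j; simp; omega)
    (by intro j; simp; omega) (by simp) (by simp) (by simp)

-- For `n < 0` this unfolds to `clampedProd g n = max 1 (clampedProd g (n + 1) / g n)`.
noncomputable def clampedProd (g : ℤ → ℝ) (n : ℤ) : ℝ :=
  if 0 ≤ n then runMin g n.toNat else (runMin (fun j ↦ g (-j - 1)) (-n).toNat)⁻¹

section ClampedProd

variable {g : ℤ → ℝ}

lemma clampedProd_of_nonpos {n : ℤ} (hn : n ≤ 0) :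
    clampedProd g n = (runMin (fun j ↦ g (-j - 1)) (-n).toNat)⁻¹ := by
  rcases hn.lt_or_eq with hn | rfl
  · exact if_neg hn.not_ge
  · simp [clampedProd, runMin]

lemma clampedProd_zero : clampedProd g 0 = 1 := by
  simp [clampedProd, runMin]

lemma clampedProd_pos (hg : ∀ j, 0 < g j) (n : ℤ) : 0 < clampedProd g n := by
  unfold clampedProd
  split_ifs
  · exact runMin_pos hg _
  · exact inv_pos.2 (runMin_pos (fun j ↦ hg _) _)

lemma clampedProd_succ_div_mem (hg : ∀ j, 0 < g j) (n : ℤ) :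
    clampedProd g (n + 1) / clampedProd g n ∈ Set.Icc (min 1 (g n)) (g n) := by
  rcases le_or_gt 0 n with hn | hn
  · have hk : (n + 1).toNat = n.toNat + 1 := by omega
    simpa only [clampedProd, if_pos hn, if_pos (by omega : 0 ≤ n + 1), hk,
      Int.toNat_of_nonneg hn] using runMin_succ_div_mem hg n.toNat
  · have hk : (-n).toNat = (-(n + 1)).toNat + 1 := by omega
    have := runMin_succ_div_mem (fun j ↦ hg (-j - 1)) (-(n + 1)).toNat
    rw [clampedProd_of_nonpos hn.le, clampedProd_of_nonpos (by omega), inv_div_inv, hk]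
    rwa [show -((-(n + 1)).toNat : ℤ) - 1 = n by omega] at this

lemma clampedProd_mem_Icc {L : ℝ} (hL₀ : 0 < L)
    (hL : ∀ m n : ℤ, m ≤ n → L ≤ ∏ j ∈ Ico m n, g j) (n : ℤ) :
    clampedProd g n ∈ Set.Icc L L⁻¹ := by
  have hL₁ : L ≤ 1 := by simpa using hL 0 0 le_rfl
  have hL₁' : 1 ≤ L⁻¹ := one_le_inv_iff₀.2 ⟨hL₀, hL₁⟩
  rcases le_total 0 n with hn | hn
  · rw [clampedProd, if_pos hn]
    exact ⟨le_runMin hL _, (runMin_le_one _).trans hL₁'⟩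
  · rw [clampedProd_of_nonpos hn]
    have hL' : ∀ m n : ℤ, m ≤ n → L ≤ ∏ j ∈ Ico m n, g (-j - 1) := fun m n hmn ↦
      prod_Ico_comp_neg_sub_one g m n ▸ hL _ _ (by omega)
    have hR := le_runMin hL' (-n).toNat
    exact ⟨hL₁.trans (one_le_inv_iff₀.2 ⟨hL₀.trans_le hR, runMin_le_one _⟩),
      inv_anti₀ hL₀ hR⟩

end ClampedProd

lemma prod_Ico_div_of_ne_zero {G : Type*} [CommGroupWithZero G] {f : ℤ → G}
    (hf : ∀ j, f j ≠ 0) {m n : ℤ} (hmn : m ≤ n) : ∏ j ∈ Ico m n, f (j + 1) / f j = f n / f m := by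
  induction n, hmn using Int.leInduction with
  | base => simp [hf]
  | succ n hmn ih =>
    rw [← prod_Ico_mul_eq_prod_Ico_add_one hmn, ih, mul_comm, div_mul_div_cancel₀ (hf n)]

lemma abs_sub_max_min_le {α : Type*} [AddCommGroup α] [LinearOrder α] [IsOrderedAddMonoid α]
    {a b r x : α} (hr : 0 ≤ r) (hx : x ∈ Set.Icc (a - r) (b + r)) :
    |x - max a (min b x)| ≤ r := by
  obtain ⟨hx₁, hx₂⟩ := hx
  rw [abs_sub_le_iff, sub_le_iff_le_add, sub_le_iff_le_add]
  refine ⟨sub_le_iff_le_add'.1 (le_max_of_le_right (le_min ?_ (sub_le_self x hr))),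
    max_le (sub_le_iff_le_add'.1 hx₁) ((min_le_right b x).trans (le_add_of_nonneg_left hr))⟩
  exact sub_le_iff_le_add.2 hx₂

lemma div_mem_Icc_of_mem_Icc_min {c α β r : ℝ} (hc : 0 < c) (hα : 0 < α) (hαβ : α ≤ β)
    (hcβ : c ≤ β) (hr : r ∈ Set.Icc (min 1 (c / α)) (c / α)) : c / r ∈ Set.Icc α β := by
  have hr₀ : 0 < r := (lt_min one_pos (div_pos hc hα)).trans_le hr.1
  have hβ : 0 < β := hα.trans_le hαβ
  have hcβr : c / β ≤ r :=
    (le_min ((div_le_one hβ).2 hcβ) (div_le_div_of_nonneg_left hc.le hα hαβ)).trans hr.1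
  exact ⟨(le_div_comm₀ hα hr₀).2 hr.2, (div_le_comm₀ hr₀ hβ).2 hcβr⟩

lemma exists_mem_Icc_prod_Ico_div_mem_Icc {c : ℤ → ℝ} (hc : ∀ n, 0 < c n) {α β L : ℝ}
    (hα : 0 < α) (hαβ : α ≤ β) (hcβ : ∀ n, c n ≤ β) (hL₀ : 0 < L)
    (hL : ∀ m n : ℤ, m ≤ n → L ≤ ∏ j ∈ Ico m n, c j / α) :
    ∃ d : ℤ → ℝ, (∀ n, d n ∈ Set.Icc α β) ∧
      (∀ n, 0 ≤ n → ∏ j ∈ Ico 0 n, c j / d j ∈ Set.Icc L L⁻¹) ∧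
      (∀ n ≤ 0, ∏ j ∈ Ico n 0, (c j / d j)⁻¹ ∈ Set.Icc L L⁻¹) := by
  set P := clampedProd fun j ↦ c j / α
  have hg : ∀ j, 0 < c j / α := fun j ↦ div_pos (hc j) hα
  have hP₀ : ∀ n, P n ≠ 0 := fun n ↦ (clampedProd_pos hg n).ne'
  have hP0 : P 0 = 1 := clampedProd_zero
  have hcd : ∀ n, c n / (c n / (P (n + 1) / P n)) = P (n + 1) / P n :=
    fun n ↦ div_div_cancel₀ (hc n).ne'
  refine ⟨fun n ↦ c n / (P (n + 1) / P n), fun n ↦ ?_, fun n hn ↦ ?_, fun n hn ↦ ?_⟩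
  · exact div_mem_Icc_of_mem_Icc_min (hc n) hα hαβ (hcβ n) (clampedProd_succ_div_mem hg n)
  · simp only [hcd]
    rw [prod_Ico_div_of_ne_zero hP₀ hn, hP0, div_one]
    exact clampedProd_mem_Icc hL₀ hL n
  · simp only [hcd]
    rw [prod_inv_distrib, prod_Ico_div_of_ne_zero hP₀ hn, hP0, one_div, inv_inv]
    exact clampedProd_mem_Icc hL₀ hL n

theorem technical_lemma_general (c : ℤ → ℝ)
    (hc : ∃ ε M : ℝ, 0 < ε ∧ ∀ n, ε ≤ c n ∧ c n ≤ M)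
    (a b δ : ℝ) (hab : a ≤ b) (hδ : 0 < δ) (hδ2 : δ < 2 * a)
    (θ K : ℝ) (hθ : θ ∈ Set.Ioo (0:ℝ) 1) (hK : 1 ≤ K)
    (hU : ∀ n k : ℤ, n ≤ k →
      |fundS (fun j => c j / (a - δ / 2)) n * (fundS (fun j => c j / (a - δ / 2)) k)⁻¹| ≤
        K * θ ^ (k - n))
    (hS : ∀ n k : ℤ, k ≤ n →
      |fundS (fun j => c j / (b + δ / 2)) n * (fundS (fun j => c j / (b + δ / 2)) k)⁻¹| ≤
        θ ^ (n - k)) :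
    ∃ h Δ : ℤ → ℝ, ∃ M₁ M₂ : ℝ, 0 < M₂ ∧ M₂ < 1 ∧ 1 < M₁ ∧
      (∀ n, h n ∈ Set.Icc a b) ∧ (∀ n, |Δ n| ≤ δ / 2) ∧
      (∀ n : ℤ, 1 ≤ n →
        M₂ ≤ ∏ j ∈ Finset.Ico (0:ℤ) n, c j / (h j + Δ j) ∧
        ∏ j ∈ Finset.Ico (0:ℤ) n, c j / (h j + Δ j) ≤ M₁) ∧
      (∀ n : ℤ, n ≤ -1 →
        M₂ ≤ ∏ j ∈ Finset.Ico n (0:ℤ), (c j / (h j + Δ j))⁻¹ ∧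
        ∏ j ∈ Finset.Ico n (0:ℤ), (c j / (h j + Δ j))⁻¹ ≤ M₁) := by
  obtain ⟨ε, _, hε, hcε⟩ := hc
  have hc₀ : ∀ n, 0 < c n := fun n ↦ hε.trans_le (hcε n).1
  have hα : 0 < a - δ / 2 := by linarith
  have hβ : 0 < b + δ / 2 := by linarith
  have hcβ : ∀ n, c n ≤ b + δ / 2 := fun n ↦ by
    have := abs_le_of_fundS_mul_inv_le (fun j ↦ (div_pos (hc₀ j) hβ).ne') hS n
    rw [abs_of_pos (div_pos (hc₀ n) hβ)] at this
    exact (div_le_one hβ).1 (this.trans hθ.2.le)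
  obtain ⟨d, hd, hprod_pos, hprod_neg⟩ := exists_mem_Icc_prod_Ico_div_mem_Icc hc₀ hα
    (by linarith) hcβ (inv_pos.2 (by linarith)) fun _ _ ↦
      inv_le_prod_Ico_of_fundS_mul_inv_le (fun j ↦ div_pos (hc₀ j) hα) (by linarith) hθ.1
        hθ.2.le hU
  have hM : Set.Icc K⁻¹ K⁻¹⁻¹ ⊆ Set.Icc (K + 1)⁻¹ (K + 1) := by
    rw [inv_inv]
    exact Set.Icc_subset_Icc (inv_anti₀ (by linarith) (by linarith)) (by linarith)
  refine ⟨fun n ↦ max a (min b (d n)), fun n ↦ d n - max a (min b (d n)), K + 1, (K + 1)⁻¹,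
    by positivity, inv_lt_one_of_one_lt₀ (by linarith), by linarith,
    fun n ↦ ⟨le_max_left _ _, max_le hab (min_le_left _ _)⟩,
    fun n ↦ abs_sub_max_min_le (by linarith) (hd n), fun n hn ↦ ?_, fun n hn ↦ ?_⟩
  · simpa only [add_sub_cancel, Set.mem_Icc] using hM (hprod_pos n (by omega))
  · simpa only [add_sub_cancel, Set.mem_Icc] using hM (hprod_neg n (by omega))

/-- Existence of sequences h(n) ∈ [a,b] and |Δ(n)| ≤ δ/2 making all the products
∏ c(j)/(h(j)+Δ(j)) uniformly bounded above and below. -/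
theorem technical_lemma (c : ℤ → ℝ)
    (hc : ∃ ε M : ℝ, 0 < ε ∧ ∀ n, ε ≤ c n ∧ c n ≤ M)
    (a b δ : ℝ) (ha : 0 < a) (hab : a ≤ b) (hδ : 0 < δ) (hδ2 : δ < 2 * a)
    (θ K : ℝ) (hθ : θ ∈ Set.Ioo (0:ℝ) 1) (hK : 1 ≤ K)
    (hU : ∀ n k : ℤ, n ≤ k →
      |fundS (fun j => c j / (a - δ / 2)) n * (fundS (fun j => c j / (a - δ / 2)) k)⁻¹| ≤
        K * θ ^ (k - n))
    (hS : ∀ n k : ℤ, k ≤ n →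
      |fundS (fun j => c j / (b + δ / 2)) n * (fundS (fun j => c j / (b + δ / 2)) k)⁻¹| ≤
        θ ^ (n - k)) :
    ∃ h Δ : ℤ → ℝ, ∃ M₁ M₂ : ℝ, 0 < M₂ ∧ M₂ < 1 ∧ 1 < M₁ ∧
      (∀ n, h n ∈ Set.Icc a b) ∧ (∀ n, |Δ n| ≤ δ / 2) ∧
      (∀ n : ℤ, 1 ≤ n →
        M₂ ≤ ∏ j ∈ Finset.Ico (0:ℤ) n, c j / (h j + Δ j) ∧
        ∏ j ∈ Finset.Ico (0:ℤ) n, c j / (h j + Δ j) ≤ M₁) ∧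
      (∀ n : ℤ, n ≤ -1 →
        M₂ ≤ ∏ j ∈ Finset.Ico n (0:ℤ), (c j / (h j + Δ j))⁻¹ ∧
        ∏ j ∈ Finset.Ico n (0:ℤ), (c j / (h j + Δ j))⁻¹ ≤ M₁) :=
  technical_lemma_general c hc a b δ hab hδ hδ2 θ K hθ hK hU hS
end

section
/- Let A(n) be invertible d×d matrices, uniformly bounded with uniformly bounded inverses, and suppose Σ(A)=⋃_{i=1}^{ℓ}[a_i,b_i] with 0<a_1≤b_1<⋯<a_ℓ≤b_ℓ (ℓ≤d disjoint spectral intervals). If λ∈(b_{ℓ-1},a_ℓ) so that x(n+1)=λ^{-1}A(n)x(n) has an exponential dichotomy with projector P_λ of rank m<d, and this system is kinematically similar to a block-diagonal system diag(A_1(n),A_2(n)) with A_1 of size m×m having dichotomy with projector I and A_2 of size (d−m)×(d−m) having dichotomy with projector 0, then Σ(λA_1)=⋃_{i=1}^{ℓ-1}[a_i,b_i] and Σ(λA_2)=[a_ℓ,b_ℓ]. -/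
open scoped Matrix
attribute [local instance] Matrix.linftyOpNormedRing

variable {d : ℕ}

noncomputable def fund (A : ℤ → Matrix (Fin d) (Fin d) ℝ) (n : ℤ) : Matrix (Fin d) (Fin d) ℝ :=
  if 0 ≤ n then ((List.range n.toNat).map (fun j => A (n - 1 - (j : ℤ)))).prod
  else ((List.range (-n).toNat).map (fun j => (A (n + (j : ℤ)))⁻¹)).prod

def ExpDich (A : ℤ → Matrix (Fin d) (Fin d) ℝ) : Prop :=
  ∃ K ρ : ℝ, 1 ≤ K ∧ ρ ∈ Set.Ioo (0:ℝ) 1 ∧ ∃ P : Matrix (Fin d) (Fin d) ℝ, P * P = P ∧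
    (∀ n k : ℤ, k ≤ n → ‖fund A n * P * (fund A k)⁻¹‖ ≤ K * ρ ^ (n - k)) ∧
    (∀ n k : ℤ, n ≤ k → ‖fund A n * (1 - P) * (fund A k)⁻¹‖ ≤ K * ρ ^ (k - n))

def KinSim (A B : ℤ → Matrix (Fin d) (Fin d) ℝ) : Prop :=
  ∃ F : ℤ → Matrix (Fin d) (Fin d) ℝ, (∀ n, IsUnit (F n)) ∧
    (∃ M : ℝ, ∀ n, ‖F n‖ ≤ M) ∧ (∃ M : ℝ, ∀ n, ‖(F n)⁻¹‖ ≤ M) ∧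
    ∀ n, F (n + 1) * B n = A n * F n

def SSpec (A : ℤ → Matrix (Fin d) (Fin d) ℝ) : Set ℝ :=
  {l | 0 < l ∧ ¬ ExpDich (fun n => l⁻¹ • A n)}
def ExpDichWith (A : ℤ → Matrix (Fin d) (Fin d) ℝ) (P : Matrix (Fin d) (Fin d) ℝ) : Prop :=
  P * P = P ∧ ∃ K ρ : ℝ, 1 ≤ K ∧ ρ ∈ Set.Ioo (0:ℝ) 1 ∧
    (∀ n k : ℤ, k ≤ n → ‖fund A n * P * (fund A k)⁻¹‖ ≤ K * ρ ^ (n - k)) ∧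
    (∀ n k : ℤ, n ≤ k → ‖fund A n * (1 - P) * (fund A k)⁻¹‖ ≤ K * ρ ^ (k - n))

/-!
Scaling a system by `c > 0` scales its dichotomy spectrum by `c`, and kinematic similarity
preserves it; so `Σ(λ A₁)` and `Σ(λ A₂)` are `λ` times the parts of
`Σ(diag(A₁, A₂)) = Σ(λ⁻¹ A) = λ⁻¹ Σ(A)` below and above `1`, and the last gap separates the
first `ℓ - 1` spectral intervals from the last one.

The splitting rests on a uniqueness argument for dichotomy projectors. Suppose the second block
of `diag(B₁, B₂)` has a dichotomy with projector `P₂`, and put `D = diag(0, P₂)`, `E = diag(0, 1)`.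
For every dichotomy projector `Q` of the whole system the products `(E - D) Q`, `D (1 - Q)`,
`Q (E - D)` and `(1 - Q) D` vanish: each equals `X Φ(k)⁻¹ · Φ(k) Y` with both factors decaying
as `k → ∞`, or both as `k → -∞`. Hence `E Q = D = Q E`, so `Q` is block diagonal and the whole
system has a dichotomy iff `B₁` has one. As `A₁` has projector `1`, so has `μ⁻¹ A₁` for `μ ≥ 1`,
whence `Σ(A₁) ⊆ (0, 1)`; and for `μ < 1` the block `μ⁻¹ A₂` keeps the projector `0`, so
`μ⁻¹ diag(A₁, A₂)` has a dichotomy iff `μ⁻¹ A₁` has. The second block is symmetric.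
-/

open Set Filter Topology
open scoped Pointwise

attribute [local instance] Matrix.linftyOpNormSMulClass

namespace IsUnit

variable {n α : Type*} [Fintype n] [DecidableEq n] [CommRing α] {M : Matrix n n α}

lemma mul_nonsing_inv (h : IsUnit M) : M * M⁻¹ = 1 :=
  M.mul_nonsing_inv (M.isUnit_iff_isUnit_det.mp h)

lemma nonsing_inv_mul (h : IsUnit M) : M⁻¹ * M = 1 :=
  M.nonsing_inv_mul (M.isUnit_iff_isUnit_det.mp h)

end IsUnit

lemma IsUnit.smul_of_ne_zero {K R : Type*} [GroupWithZero K] [Monoid R] [MulAction K R]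
    [SMulCommClass K R R] [IsScalarTower K R R] {M : R} {c : K} (hM : IsUnit M) (hc : c ≠ 0) :
    IsUnit (c • M) :=
  (isUnit_smul_iff (Units.mk0 c hc) M).mpr hM

lemma Matrix.inv_smul_of_ne_zero {n K : Type*} [Fintype n] [DecidableEq n] [Field K]
    {M : Matrix n n K} {c : K} (hM : IsUnit M) (hc : c ≠ 0) : (c • M)⁻¹ = c⁻¹ • M⁻¹ :=
  M.inv_smul' (Units.mk0 c hc) (M.isUnit_iff_isUnit_det.mp hM)

section LinftyNorm

variable {α β γ : Type*} [Fintype α] [Fintype β] [Fintype γ]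
  [DecidableEq α] [DecidableEq β] [DecidableEq γ]

lemma Matrix.linfty_opNNNorm_submatrix_equiv (e : α ≃ β) (M : Matrix β β ℝ) :
    ‖M.submatrix e e‖₊ = ‖M‖₊ := by
  have hrow (i : α) : ∑ j, ‖M (e i) (e j)‖₊ = ∑ j, ‖M (e i) j‖₊ :=
    Equiv.sum_comp e (fun j => ‖M (e i) j‖₊)
  simp only [Matrix.linfty_opNNNorm_def, Matrix.submatrix_apply, hrow]
  exact (Finset.sup_map _ e.toEmbedding (fun i => ∑ j, ‖M i j‖₊)).symm.trans
    (congrArg (Finset.sup · _) (Finset.map_univ_equiv e))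

lemma Matrix.linfty_opNNNorm_fromBlocks_zero (X : Matrix α α ℝ) (Y : Matrix γ γ ℝ) :
    ‖Matrix.fromBlocks X 0 0 Y‖₊ = max ‖X‖₊ ‖Y‖₊ := by
  simp [Matrix.linfty_opNNNorm_def, ← Finset.univ_disjSum_univ, Finset.sup_disjSum]

end LinftyNorm

lemma mul_eq_zero_of_tendsto_norm {R ι : Type*} [NormedRing R] {l : Filter ι} [l.NeBot]
    {X Y : R} (G G' : ι → R) (hG : ∀ i, G' i * G i = 1)
    (hX : Tendsto (fun i => ‖X * G' i‖) l (𝓝 0)) (hY : Tendsto (fun i => ‖G i * Y‖) l (𝓝 0)) :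
    X * Y = 0 := by
  have hXY (i : ι) : ‖X * Y‖ ≤ ‖X * G' i‖ * ‖G i * Y‖ :=
    calc ‖X * Y‖ = ‖X * G' i * (G i * Y)‖ := by rw [mul_assoc, ← mul_assoc (G' i), hG, one_mul]
      _ ≤ ‖X * G' i‖ * ‖G i * Y‖ := norm_mul_le _ _
  exact norm_le_zero_iff.mp (ge_of_tendsto' (by simpa using hX.mul hY) hXY)

lemma tendsto_of_le_geometric {f : ℕ → ℝ} {K ρ : ℝ} (hρ : ρ ∈ Ioo (0 : ℝ) 1)
    (hf : ∀ k, 0 ≤ f k) (h : ∀ k, f k ≤ K * ρ ^ k) : Tendsto f atTop (𝓝 0) :=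
  squeeze_zero hf h
    (by simpa using (tendsto_pow_atTop_nhds_zero_of_lt_one hρ.1.le hρ.2).const_mul K)

variable {p q r : ℕ}

section Fundamental

variable (A : ℤ → Matrix (Fin p) (Fin p) ℝ)

@[simp] lemma fund_zero : fund A 0 = 1 := by simp [fund]

lemma fund_natCast_succ (k : ℕ) : fund A (k + 1) = A k * fund A k := by
  rw [fund, fund, if_pos (by omega), if_pos (by omega),
    show ((k : ℤ) + 1).toNat = k + 1 by omega, Int.toNat_natCast, List.range_succ_eq_map]
  -- `fund` casts `List.range` to a list of integers through the list monad
  simp only [bind_pure_comp, List.map_eq_map, List.map_cons, List.map_map, List.prod_cons]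
  congr 3
  · simp
  · funext j
    simp
    ring_nf

lemma fund_neg_succ (k : ℕ) : fund A (-(k + 1)) = (A (-(k + 1)))⁻¹ * fund A (-k) := by
  rcases k.eq_zero_or_pos with rfl | hk
  · simp [fund]
  rw [fund, fund, if_neg (by omega), if_neg (by omega),
    show (-(-((k : ℤ) + 1))).toNat = k + 1 by omega, neg_neg, Int.toNat_natCast,
    List.range_succ_eq_map]
  simp only [bind_pure_comp, List.map_eq_map, List.map_cons, List.map_map, List.prod_cons]
  congr 3
  funext j
  simp
  ring_nf

variable {A}

lemma fund_succ (hA : ∀ n, IsUnit (A n)) (n : ℤ) : fund A (n + 1) = A n * fund A n := by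
  obtain ⟨k, rfl | rfl⟩ := Int.eq_nat_or_neg n
  · exact fund_natCast_succ A k
  rcases k with _ | k
  · simpa using fund_natCast_succ A 0
  push_cast
  rw [fund_neg_succ, ← mul_assoc, (hA _).mul_nonsing_inv, one_mul]
  ring_nf

lemma fund_eq_inv_mul_fund_succ (hA : ∀ n, IsUnit (A n)) (n : ℤ) :
    fund A n = (A n)⁻¹ * fund A (n + 1) := by
  rw [fund_succ hA, ← mul_assoc, (hA n).nonsing_inv_mul, one_mul]

lemma isUnit_fund (hA : ∀ n, IsUnit (A n)) (n : ℤ) : IsUnit (fund A n) := by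
  induction n using Int.induction_on with
  | zero => simp
  | succ k ih => rw [fund_succ hA]; exact (hA k).mul ih
  | pred k ih =>
    rw [fund_eq_inv_mul_fund_succ hA, sub_add_cancel]
    exact (Matrix.isUnit_nonsing_inv_iff.mpr (hA _)).mul ih

lemma eq_fund_of_recursion (hA : ∀ n, IsUnit (A n)) {G : ℤ → Matrix (Fin p) (Fin p) ℝ}
    (h0 : G 0 = 1) (hs : ∀ n, G (n + 1) = A n * G n) (n : ℤ) : G n = fund A n := by
  induction n using Int.induction_on with
  | zero => rw [h0, fund_zero]
  | succ k ih => rw [hs, fund_succ hA, ih]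
  | pred k ih =>
    have hk := hs (-k - 1)
    rw [sub_add_cancel] at hk
    rw [fund_eq_inv_mul_fund_succ hA, sub_add_cancel, ← ih, hk, ← mul_assoc,
      (hA _).nonsing_inv_mul, one_mul]

end Fundamental

section Smul

variable {B : ℤ → Matrix (Fin p) (Fin p) ℝ} {c : ℝ}

lemma fund_smul (hB : ∀ n, IsUnit (B n)) (hc : c ≠ 0) (n : ℤ) :
    fund (fun k => c • B k) n = c ^ n • fund B n := by
  refine (eq_fund_of_recursion (fun k => (hB k).smul_of_ne_zero hc)
    (G := fun k => c ^ k • fund B k) (by simp) (fun k => ?_) n).symm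
  rw [fund_succ hB, smul_mul_smul_comm, zpow_add_one₀ hc, mul_comm]

lemma fund_smul_conj (hB : ∀ n, IsUnit (B n)) (hc : c ≠ 0) (R : Matrix (Fin p) (Fin p) ℝ)
    (n k : ℤ) :
    fund (fun j => c • B j) n * R * (fund (fun j => c • B j) k)⁻¹
      = c ^ (n - k) • (fund B n * R * (fund B k)⁻¹) := by
  rw [fund_smul hB hc, fund_smul hB hc,
    Matrix.inv_smul_of_ne_zero (isUnit_fund hB k) (zpow_ne_zero k hc),
    zpow_sub₀ hc, div_eq_mul_inv, mul_comm, ← smul_smul]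
  simp only [smul_mul_assoc, mul_smul_comm]

end Smul

lemma ExpDichWith.expDich {A : ℤ → Matrix (Fin p) (Fin p) ℝ} {P : Matrix (Fin p) (Fin p) ℝ}
    (h : ExpDichWith A P) : ExpDich A :=
  let ⟨hP, K, ρ, hK, hρ, hs, hu⟩ := h
  ⟨K, ρ, hK, hρ, P, hP, hs, hu⟩

lemma expDich_iff_exists_expDichWith {A : ℤ → Matrix (Fin p) (Fin p) ℝ} :
    ExpDich A ↔ ∃ P, ExpDichWith A P :=
  ⟨fun ⟨K, ρ, hK, hρ, P, hP, hs, hu⟩ => ⟨P, hP, K, ρ, hK, hρ, hs, hu⟩, fun ⟨_, h⟩ => h.expDich⟩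

section Decay

variable {A : ℤ → Matrix (Fin p) (Fin p) ℝ} {P : Matrix (Fin p) (Fin p) ℝ}

lemma ExpDichWith.tendsto_norm_fund_mul (h : ExpDichWith A P) :
    Tendsto (fun k : ℕ => ‖fund A k * P‖) atTop (𝓝 0) := by
  obtain ⟨-, K, ρ, -, hρ, hs, -⟩ := h
  exact tendsto_of_le_geometric hρ (fun _ => norm_nonneg _) fun k => by
    simpa using hs k 0 (by positivity)

lemma ExpDichWith.tendsto_norm_mul_inv_fund_neg (h : ExpDichWith A P) :
    Tendsto (fun k : ℕ => ‖P * (fund A (-k))⁻¹‖) atTop (𝓝 0) := by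
  obtain ⟨-, K, ρ, -, hρ, hs, -⟩ := h
  exact tendsto_of_le_geometric hρ (fun _ => norm_nonneg _) fun k => by
    simpa using hs 0 (-k) (by omega)

lemma ExpDichWith.tendsto_norm_fund_neg_mul_compl (h : ExpDichWith A P) :
    Tendsto (fun k : ℕ => ‖fund A (-k) * (1 - P)‖) atTop (𝓝 0) := by
  obtain ⟨-, K, ρ, -, hρ, -, hu⟩ := h
  exact tendsto_of_le_geometric hρ (fun _ => norm_nonneg _) fun k => by
    simpa using hu (-k) 0 (by omega)

lemma ExpDichWith.tendsto_norm_compl_mul_inv_fund (h : ExpDichWith A P) :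
    Tendsto (fun k : ℕ => ‖(1 - P) * (fund A k)⁻¹‖) atTop (𝓝 0) := by
  obtain ⟨-, K, ρ, -, hρ, -, hu⟩ := h
  exact tendsto_of_le_geometric hρ (fun _ => norm_nonneg _) fun k => by
    simpa using hu 0 k (by positivity)

end Decay

section Vanishing

variable {A : ℤ → Matrix (Fin p) (Fin p) ℝ} {X Y : Matrix (Fin p) (Fin p) ℝ}

lemma mul_eq_zero_of_tendsto_fund (hA : ∀ n, IsUnit (A n))
    (hX : Tendsto (fun k : ℕ => ‖X * (fund A k)⁻¹‖) atTop (𝓝 0))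
    (hY : Tendsto (fun k : ℕ => ‖fund A k * Y‖) atTop (𝓝 0)) : X * Y = 0 :=
  mul_eq_zero_of_tendsto_norm _ _ (fun _ => (isUnit_fund hA _).nonsing_inv_mul) hX hY

lemma mul_eq_zero_of_tendsto_fund_neg (hA : ∀ n, IsUnit (A n))
    (hX : Tendsto (fun k : ℕ => ‖X * (fund A (-k))⁻¹‖) atTop (𝓝 0))
    (hY : Tendsto (fun k : ℕ => ‖fund A (-k) * Y‖) atTop (𝓝 0)) : X * Y = 0 :=
  mul_eq_zero_of_tendsto_norm _ _ (fun _ => (isUnit_fund hA _).nonsing_inv_mul) hX hY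

end Vanishing

section Scaling

variable {B : ℤ → Matrix (Fin p) (Fin p) ℝ} {c : ℝ}

lemma ExpDichWith.smul_of_le_one (hB : ∀ n, IsUnit (B n)) (h : ExpDichWith B 1) (hc₀ : 0 < c)
    (hc₁ : c ≤ 1) : ExpDichWith (fun n => c • B n) 1 := by
  obtain ⟨hP, K, ρ, hK, hρ, hs, -⟩ := h
  refine ⟨hP, K, ρ, hK, hρ, fun n k hkn => ?_, fun n k _ => ?_⟩
  · rw [fund_smul_conj hB hc₀.ne', norm_smul, Real.norm_of_nonneg (zpow_nonneg hc₀.le _)]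
    exact (mul_le_of_le_one_left (norm_nonneg _) (zpow_le_one₀ hc₀ hc₁ (by omega))).trans
      (hs n k hkn)
  · simpa using mul_nonneg (zero_le_one.trans hK) (zpow_nonneg hρ.1.le (k - n))

lemma ExpDichWith.smul_of_one_le (hB : ∀ n, IsUnit (B n)) (h : ExpDichWith B 0) (hc : 1 ≤ c) :
    ExpDichWith (fun n => c • B n) 0 := by
  obtain ⟨hP, K, ρ, hK, hρ, -, hu⟩ := h
  refine ⟨hP, K, ρ, hK, hρ, fun n k _ => ?_, fun n k hnk => ?_⟩
  · simpa using mul_nonneg (zero_le_one.trans hK) (zpow_nonneg hρ.1.le (n - k))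
  · have hc₀ : 0 < c := zero_lt_one.trans_le hc
    rw [fund_smul_conj hB hc₀.ne', norm_smul, Real.norm_of_nonneg (zpow_nonneg hc₀.le _)]
    exact (mul_le_of_le_one_left (norm_nonneg _) (zpow_le_one_of_nonpos₀ hc (by omega))).trans
      (hu n k hnk)

end Scaling

section KinematicSimilarity

variable {A B : ℤ → Matrix (Fin p) (Fin p) ℝ}

lemma KinSim.isUnit (hA : ∀ n, IsUnit (A n)) (h : KinSim A B) (n : ℤ) : IsUnit (B n) := by
  obtain ⟨F, hF, -, -, hrel⟩ := h
  have hB : B n = (F (n + 1))⁻¹ * (A n * F n) := by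
    rw [← hrel, ← mul_assoc, (hF _).nonsing_inv_mul, one_mul]
  rw [hB]
  exact (Matrix.isUnit_nonsing_inv_iff.mpr (hF _)).mul ((hA n).mul (hF n))

lemma KinSim.symm (h : KinSim A B) : KinSim B A := by
  obtain ⟨F, hF, ⟨M₁, hM₁⟩, ⟨M₂, hM₂⟩, hrel⟩ := h
  refine ⟨fun n => (F n)⁻¹, fun n => Matrix.isUnit_nonsing_inv_iff.mpr (hF n), ⟨M₂, hM₂⟩,
    ⟨M₁, fun n => ?_⟩, fun n => ?_⟩
  · rw [Matrix.nonsing_inv_nonsing_inv _ ((F n).isUnit_iff_isUnit_det.mp (hF n))]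
    exact hM₁ n
  · calc (F (n + 1))⁻¹ * A n = (F (n + 1))⁻¹ * (A n * F n) * (F n)⁻¹ := by
          rw [mul_assoc, mul_assoc, (hF n).mul_nonsing_inv, mul_one]
      _ = B n * (F n)⁻¹ := by
          rw [← hrel, ← mul_assoc, (hF _).nonsing_inv_mul, one_mul]

lemma KinSim.smul (h : KinSim A B) (c : ℝ) : KinSim (fun n => c • A n) (fun n => c • B n) := by
  obtain ⟨F, hF, hM₁, hM₂, hrel⟩ := h
  exact ⟨F, hF, hM₁, hM₂, fun n => by rw [mul_smul_comm, hrel, smul_mul_assoc]⟩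

lemma fund_eq_of_conj (hA : ∀ n, IsUnit (A n)) (hB : ∀ n, IsUnit (B n))
    {F : ℤ → Matrix (Fin p) (Fin p) ℝ} (hF : IsUnit (F 0))
    (hrel : ∀ n, F (n + 1) * B n = A n * F n) (n : ℤ) :
    fund A n = F n * fund B n * (F 0)⁻¹ := by
  refine (eq_fund_of_recursion hA (G := fun k => F k * fund B k * (F 0)⁻¹)
    (by simp [hF.mul_nonsing_inv]) (fun k => ?_) n).symm
  rw [fund_succ hB, ← mul_assoc, ← mul_assoc, hrel, mul_assoc (A k)]

lemma ExpDich.of_kinSim (hA : ∀ n, IsUnit (A n)) (h : KinSim A B) (hB : ExpDich B) :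
    ExpDich A := by
  have hBu := h.isUnit hA
  obtain ⟨F, hF, ⟨M₁, hM₁⟩, ⟨M₂, hM₂⟩, hrel⟩ := h
  obtain ⟨K, ρ, hK, hρ, Q, hQ, hs, hu⟩ := hB
  have hM₁0 : 0 ≤ M₁ := (norm_nonneg _).trans (hM₁ 0)
  have hM₂0 : 0 ≤ M₂ := (norm_nonneg _).trans (hM₂ 0)
  have hF0 : IsUnit (F 0).det := (F 0).isUnit_iff_isUnit_det.mp (hF 0)
  have hfund := fund_eq_of_conj hA hBu (hF 0) hrel
  have htriple (R : Matrix (Fin p) (Fin p) ℝ) (n k : ℤ) :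
      fund A n * (F 0 * R * (F 0)⁻¹) * (fund A k)⁻¹
        = F n * (fund B n * R * (fund B k)⁻¹) * (F k)⁻¹ := by
    simp only [hfund, Matrix.mul_inv_rev, Matrix.nonsing_inv_nonsing_inv _ hF0, mul_assoc,
      Matrix.nonsing_inv_mul_cancel_left _ _ hF0]
  have hbound (R : Matrix (Fin p) (Fin p) ℝ) (n k z : ℤ)
      (hR : ‖fund B n * R * (fund B k)⁻¹‖ ≤ K * ρ ^ z) :
      ‖fund A n * (F 0 * R * (F 0)⁻¹) * (fund A k)⁻¹‖ ≤ max 1 (M₁ * M₂ * K) * ρ ^ z := by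
    have hρz : 0 ≤ ρ ^ z := zpow_nonneg hρ.1.le z
    calc ‖fund A n * (F 0 * R * (F 0)⁻¹) * (fund A k)⁻¹‖
        ≤ ‖F n‖ * ‖fund B n * R * (fund B k)⁻¹‖ * ‖(F k)⁻¹‖ := htriple R n k ▸ norm_mul₃_le
      _ ≤ M₁ * (K * ρ ^ z) * M₂ := by gcongr; exacts [hM₁ n, hM₂ k]
      _ = M₁ * M₂ * K * ρ ^ z := by ring
      _ ≤ max 1 (M₁ * M₂ * K) * ρ ^ z := by gcongr; exact le_max_right _ _
  refine ⟨max 1 (M₁ * M₂ * K), ρ, le_max_left _ _, hρ, F 0 * Q * (F 0)⁻¹, ?_,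
    fun n k hkn => hbound _ _ _ _ (hs n k hkn), fun n k hnk => ?_⟩
  · simp only [mul_assoc, Matrix.nonsing_inv_mul_cancel_left _ _ hF0]
    rw [← mul_assoc Q Q, hQ]
  · have hcompl : 1 - F 0 * Q * (F 0)⁻¹ = F 0 * (1 - Q) * (F 0)⁻¹ := by
      rw [mul_sub, sub_mul, mul_one, (hF 0).mul_nonsing_inv]
    rw [hcompl]
    exact hbound _ _ _ _ (hu n k hnk)

lemma KinSim.expDich_iff (hA : ∀ n, IsUnit (A n)) (h : KinSim A B) : ExpDich A ↔ ExpDich B :=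
  ⟨ExpDich.of_kinSim (h.isUnit hA) h.symm, ExpDich.of_kinSim hA h⟩

end KinematicSimilarity

section DiagBlocks

def diagBlocks (e : Fin p ≃ Fin q ⊕ Fin r) (X : Matrix (Fin q) (Fin q) ℝ)
    (Y : Matrix (Fin r) (Fin r) ℝ) : Matrix (Fin p) (Fin p) ℝ :=
  (Matrix.fromBlocks X 0 0 Y).submatrix e e

variable (e : Fin p ≃ Fin q ⊕ Fin r) {X X' : Matrix (Fin q) (Fin q) ℝ}
  {Y Y' : Matrix (Fin r) (Fin r) ℝ}

lemma diagBlocks_mul : diagBlocks e X Y * diagBlocks e X' Y' = diagBlocks e (X * X') (Y * Y') := by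
  simp [diagBlocks, Matrix.submatrix_mul_equiv, Matrix.fromBlocks_multiply]

@[simp] lemma diagBlocks_one : diagBlocks e 1 1 = 1 := by
  simp [diagBlocks, Matrix.fromBlocks_one]

lemma diagBlocks_sub : diagBlocks e X Y - diagBlocks e X' Y' = diagBlocks e (X - X') (Y - Y') := by
  ext i j
  simp only [diagBlocks, Matrix.sub_apply, Matrix.submatrix_apply]
  rcases e i with _ | _ <;> rcases e j with _ | _ <;> simp

lemma smul_diagBlocks (c : ℝ) : c • diagBlocks e X Y = diagBlocks e (c • X) (c • Y) := by
  ext i j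
  simp only [diagBlocks, Matrix.smul_apply, Matrix.submatrix_apply]
  rcases e i with _ | _ <;> rcases e j with _ | _ <;> simp

lemma diagBlocks_inj : diagBlocks e X Y = diagBlocks e X' Y' ↔ X = X' ∧ Y = Y' := by
  refine ⟨fun h => ?_, fun ⟨hX, hY⟩ => hX ▸ hY ▸ rfl⟩
  simpa [diagBlocks, Matrix.submatrix_submatrix, Matrix.fromBlocks_inj] using
    congrArg (Matrix.submatrix · e.symm e.symm) h

lemma diagBlocks_swap :
    diagBlocks e X Y = diagBlocks (e.trans (Equiv.sumComm (Fin q) (Fin r))) Y X := by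
  rw [diagBlocks, diagBlocks, ← Matrix.fromBlocks_submatrix_sum_swap_sum_swap,
    Matrix.submatrix_submatrix]
  rfl

lemma isUnit_diagBlocks_iff : IsUnit (diagBlocks e X Y) ↔ IsUnit X ∧ IsUnit Y := by
  simp [diagBlocks]

lemma inv_diagBlocks (h : IsUnit X ↔ IsUnit Y) : (diagBlocks e X Y)⁻¹ = diagBlocks e X⁻¹ Y⁻¹ := by
  simp [diagBlocks, Matrix.inv_fromBlocks_zero₁₂_of_isUnit_iff _ _ _ h]

lemma norm_diagBlocks : ‖diagBlocks e X Y‖ = max ‖X‖ ‖Y‖ := by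
  have h : ‖diagBlocks e X Y‖₊ = max ‖X‖₊ ‖Y‖₊ := by
    rw [diagBlocks, Matrix.linfty_opNNNorm_submatrix_equiv, Matrix.linfty_opNNNorm_fromBlocks_zero]
  simpa using congrArg NNReal.toReal h

@[simp] lemma norm_diagBlocks_zero_left : ‖diagBlocks e 0 Y‖ = ‖Y‖ := by
  simp [norm_diagBlocks]

lemma exists_eq_diagBlocks_of_commute {Q : Matrix (Fin p) (Fin p) ℝ}
    (h : Commute (diagBlocks e 0 1) Q) : ∃ Q₁ Q₂, Q = diagBlocks e Q₁ Q₂ := by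
  obtain ⟨R, rfl⟩ : ∃ R, Q = R.submatrix e e := ⟨Q.submatrix e.symm e.symm, by simp⟩
  rw [← R.fromBlocks_toBlocks] at h ⊢
  obtain ⟨h₁₂, h₂₁⟩ : 0 = R.toBlocks₁₂ ∧ R.toBlocks₂₁ = 0 := by
    simpa [diagBlocks, Matrix.submatrix_mul_equiv, Matrix.fromBlocks_multiply,
      Matrix.submatrix_submatrix, Matrix.fromBlocks_inj] using
      congrArg (Matrix.submatrix · e.symm e.symm) h.eq
  exact ⟨_, _, by rw [← h₁₂, h₂₁]; rfl⟩

end DiagBlocks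

section BlockSystems

variable (e : Fin p ≃ Fin q ⊕ Fin r) {B₁ : ℤ → Matrix (Fin q) (Fin q) ℝ}
  {B₂ : ℤ → Matrix (Fin r) (Fin r) ℝ}

lemma fund_diagBlocks (h₁ : ∀ n, IsUnit (B₁ n)) (h₂ : ∀ n, IsUnit (B₂ n)) (n : ℤ) :
    fund (fun k => diagBlocks e (B₁ k) (B₂ k)) n = diagBlocks e (fund B₁ n) (fund B₂ n) :=
  (eq_fund_of_recursion (fun k => (isUnit_diagBlocks_iff e).mpr ⟨h₁ k, h₂ k⟩)
    (G := fun k => diagBlocks e (fund B₁ k) (fund B₂ k)) (by simp)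
    (fun k => by simp only [diagBlocks_mul, fund_succ h₁, fund_succ h₂]) n).symm

lemma fund_diagBlocks_conj (h₁ : ∀ n, IsUnit (B₁ n)) (h₂ : ∀ n, IsUnit (B₂ n))
    (R₁ : Matrix (Fin q) (Fin q) ℝ) (R₂ : Matrix (Fin r) (Fin r) ℝ) (n k : ℤ) :
    fund (fun j => diagBlocks e (B₁ j) (B₂ j)) n * diagBlocks e R₁ R₂
        * (fund (fun j => diagBlocks e (B₁ j) (B₂ j)) k)⁻¹
      = diagBlocks e (fund B₁ n * R₁ * (fund B₁ k)⁻¹) (fund B₂ n * R₂ * (fund B₂ k)⁻¹) := by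
  rw [fund_diagBlocks e h₁ h₂, fund_diagBlocks e h₁ h₂,
    inv_diagBlocks e (iff_of_true (isUnit_fund h₁ k) (isUnit_fund h₂ k)), diagBlocks_mul,
    diagBlocks_mul]

lemma expDichWith_diagBlocks (hB₁ : ∀ n, IsUnit (B₁ n)) (hB₂ : ∀ n, IsUnit (B₂ n))
    {P₁ : Matrix (Fin q) (Fin q) ℝ} {P₂ : Matrix (Fin r) (Fin r) ℝ}
    (h₁ : ExpDichWith B₁ P₁) (h₂ : ExpDichWith B₂ P₂) :
    ExpDichWith (fun n => diagBlocks e (B₁ n) (B₂ n)) (diagBlocks e P₁ P₂) := by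
  obtain ⟨hP₁, K₁, ρ₁, hK₁, hρ₁, hs₁, hu₁⟩ := h₁
  obtain ⟨hP₂, K₂, ρ₂, hK₂, hρ₂, hs₂, hu₂⟩ := h₂
  have hmax {x y : ℝ} {z : ℤ} (hz : 0 ≤ z) (hx : x ≤ K₁ * ρ₁ ^ z) (hy : y ≤ K₂ * ρ₂ ^ z) :
      max x y ≤ max K₁ K₂ * max ρ₁ ρ₂ ^ z := by
    have hρ₁₀ := hρ₁.1
    have hρ₂₀ := hρ₂.1
    refine max_le (hx.trans ?_) (hy.trans ?_) <;> gcongr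
    exacts [le_max_left K₁ K₂, zpow_le_zpow_left₀ hz hρ₁.1.le (le_max_left ρ₁ ρ₂),
      le_max_right K₁ K₂, zpow_le_zpow_left₀ hz hρ₂.1.le (le_max_right ρ₁ ρ₂)]
  refine ⟨by rw [diagBlocks_mul, hP₁, hP₂], max K₁ K₂, max ρ₁ ρ₂, le_max_of_le_left hK₁,
    ⟨lt_max_of_lt_left hρ₁.1, max_lt hρ₁.2 hρ₂.2⟩, fun n k hkn => ?_, fun n k hnk => ?_⟩
  · rw [fund_diagBlocks_conj e hB₁ hB₂, norm_diagBlocks]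
    exact hmax (by omega) (hs₁ n k hkn) (hs₂ n k hkn)
  · rw [← diagBlocks_one e, diagBlocks_sub, fund_diagBlocks_conj e hB₁ hB₂, norm_diagBlocks]
    exact hmax (by omega) (hu₁ n k hnk) (hu₂ n k hnk)

lemma ExpDichWith.of_diagBlocks (hB₁ : ∀ n, IsUnit (B₁ n)) (hB₂ : ∀ n, IsUnit (B₂ n))
    {P₁ : Matrix (Fin q) (Fin q) ℝ} {P₂ : Matrix (Fin r) (Fin r) ℝ}
    (h : ExpDichWith (fun n => diagBlocks e (B₁ n) (B₂ n)) (diagBlocks e P₁ P₂)) :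
    ExpDichWith B₁ P₁ ∧ ExpDichWith B₂ P₂ := by
  obtain ⟨hP, K, ρ, hK, hρ, hs, hu⟩ := h
  rw [diagBlocks_mul, diagBlocks_inj] at hP
  simp only [← diagBlocks_one e, diagBlocks_sub, fund_diagBlocks_conj e hB₁ hB₂, norm_diagBlocks,
    max_le_iff] at hs hu
  exact ⟨⟨hP.1, K, ρ, hK, hρ, fun n k h => (hs n k h).1, fun n k h => (hu n k h).1⟩,
    ⟨hP.2, K, ρ, hK, hρ, fun n k h => (hs n k h).2, fun n k h => (hu n k h).2⟩⟩

end BlockSystems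

section BlockDichotomy

variable (e : Fin p ≃ Fin q ⊕ Fin r) {B₁ : ℤ → Matrix (Fin q) (Fin q) ℝ}
  {B₂ : ℤ → Matrix (Fin r) (Fin r) ℝ}

lemma ExpDichWith.commute_diagBlocks (hB₁ : ∀ n, IsUnit (B₁ n)) (hB₂ : ∀ n, IsUnit (B₂ n))
    {Q : Matrix (Fin p) (Fin p) ℝ} {P₂ : Matrix (Fin r) (Fin r) ℝ}
    (hS : ExpDichWith (fun n => diagBlocks e (B₁ n) (B₂ n)) Q) (hB : ExpDichWith B₂ P₂) :
    Commute (diagBlocks e 0 1) Q := by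
  have hS_unit (n : ℤ) : IsUnit (diagBlocks e (B₁ n) (B₂ n)) :=
    (isUnit_diagBlocks_iff e).mpr ⟨hB₁ n, hB₂ n⟩
  have hleft (X : Matrix (Fin r) (Fin r) ℝ) (k : ℤ) :
      diagBlocks e 0 X * (fund (fun n => diagBlocks e (B₁ n) (B₂ n)) k)⁻¹
        = diagBlocks e 0 (X * (fund B₂ k)⁻¹) := by
    rw [fund_diagBlocks e hB₁ hB₂, inv_diagBlocks e (iff_of_true (isUnit_fund hB₁ k)
      (isUnit_fund hB₂ k)), diagBlocks_mul, zero_mul]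
  have hright (X : Matrix (Fin r) (Fin r) ℝ) (k : ℤ) :
      fund (fun n => diagBlocks e (B₁ n) (B₂ n)) k * diagBlocks e 0 X
        = diagBlocks e 0 (fund B₂ k * X) := by
    rw [fund_diagBlocks e hB₁ hB₂, diagBlocks_mul, mul_zero]
  have hcompl : diagBlocks e 0 (1 - P₂) = diagBlocks e 0 1 - diagBlocks e 0 P₂ := by
    rw [diagBlocks_sub, sub_zero]
  have h₁ : diagBlocks e 0 (1 - P₂) * Q = 0 := mul_eq_zero_of_tendsto_fund hS_unit
    (by simpa only [hleft, norm_diagBlocks_zero_left] using hB.tendsto_norm_compl_mul_inv_fund)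
    hS.tendsto_norm_fund_mul
  have h₂ : diagBlocks e 0 P₂ * (1 - Q) = 0 := mul_eq_zero_of_tendsto_fund_neg hS_unit
    (by simpa only [hleft, norm_diagBlocks_zero_left] using hB.tendsto_norm_mul_inv_fund_neg)
    hS.tendsto_norm_fund_neg_mul_compl
  have h₃ : Q * diagBlocks e 0 (1 - P₂) = 0 := mul_eq_zero_of_tendsto_fund_neg hS_unit
    hS.tendsto_norm_mul_inv_fund_neg
    (by simpa only [hright, norm_diagBlocks_zero_left] using hB.tendsto_norm_fund_neg_mul_compl)
  have h₄ : (1 - Q) * diagBlocks e 0 P₂ = 0 := mul_eq_zero_of_tendsto_fund hS_unit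
    hS.tendsto_norm_compl_mul_inv_fund
    (by simpa only [hright, norm_diagBlocks_zero_left] using hB.tendsto_norm_fund_mul)
  rw [hcompl, sub_mul, sub_eq_zero] at h₁
  rw [hcompl, mul_sub, sub_eq_zero] at h₃
  rw [mul_sub, mul_one, sub_eq_zero] at h₂
  rw [sub_mul, one_mul, sub_eq_zero] at h₄
  exact h₁.trans (h₂.symm.trans (h₄.trans h₃.symm))

lemma ExpDich.of_diagBlocks_right (hB₁ : ∀ n, IsUnit (B₁ n)) (hB₂ : ∀ n, IsUnit (B₂ n))
    {P₂ : Matrix (Fin r) (Fin r) ℝ} (hS : ExpDich (fun n => diagBlocks e (B₁ n) (B₂ n)))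
    (hB : ExpDichWith B₂ P₂) : ExpDich B₁ := by
  obtain ⟨Q, hQ⟩ := expDich_iff_exists_expDichWith.mp hS
  obtain ⟨Q₁, Q₂, rfl⟩ := exists_eq_diagBlocks_of_commute e (hQ.commute_diagBlocks e hB₁ hB₂ hB)
  exact (hQ.of_diagBlocks e hB₁ hB₂).1.expDich

lemma ExpDich.of_diagBlocks_left (hB₁ : ∀ n, IsUnit (B₁ n)) (hB₂ : ∀ n, IsUnit (B₂ n))
    {P₁ : Matrix (Fin q) (Fin q) ℝ} (hS : ExpDich (fun n => diagBlocks e (B₁ n) (B₂ n)))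
    (hB : ExpDichWith B₁ P₁) : ExpDich B₂ := by
  have hswap : (fun n => diagBlocks e (B₁ n) (B₂ n))
      = fun n => diagBlocks (e.trans (Equiv.sumComm _ _)) (B₂ n) (B₁ n) :=
    funext fun n => diagBlocks_swap e
  rw [hswap] at hS
  exact hS.of_diagBlocks_right _ hB₂ hB₁ hB

lemma expDich_diagBlocks_iff_left (hB₁ : ∀ n, IsUnit (B₁ n)) (hB₂ : ∀ n, IsUnit (B₂ n))
    {P₂ : Matrix (Fin r) (Fin r) ℝ} (hB : ExpDichWith B₂ P₂) :
    ExpDich (fun n => diagBlocks e (B₁ n) (B₂ n)) ↔ ExpDich B₁ := by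
  refine ⟨fun h => h.of_diagBlocks_right e hB₁ hB₂ hB, fun h => ?_⟩
  obtain ⟨P₁, h₁⟩ := expDich_iff_exists_expDichWith.mp h
  exact (expDichWith_diagBlocks e hB₁ hB₂ h₁ hB).expDich

lemma expDich_diagBlocks_iff_right (hB₁ : ∀ n, IsUnit (B₁ n)) (hB₂ : ∀ n, IsUnit (B₂ n))
    {P₁ : Matrix (Fin q) (Fin q) ℝ} (hB : ExpDichWith B₁ P₁) :
    ExpDich (fun n => diagBlocks e (B₁ n) (B₂ n)) ↔ ExpDich B₂ := by
  refine ⟨fun h => h.of_diagBlocks_left e hB₁ hB₂ hB, fun h => ?_⟩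
  obtain ⟨P₂, h₂⟩ := expDich_iff_exists_expDichWith.mp h
  exact (expDichWith_diagBlocks e hB₁ hB₂ hB h₂).expDich

end BlockDichotomy

section Spectrum

variable {B : ℤ → Matrix (Fin p) (Fin p) ℝ}

lemma SSpec_smul {c : ℝ} (hc : 0 < c) : SSpec (fun n => c • B n) = c • SSpec B := by
  ext μ
  rw [mem_smul_set_iff_inv_smul_mem₀ hc.ne']
  simp only [SSpec, mem_ofPred_eq, smul_eq_mul, smul_smul, mul_inv, inv_inv,
    mul_pos_iff_of_pos_left (inv_pos.mpr hc), mul_comm c]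

lemma KinSim.SSpec_eq {A : ℤ → Matrix (Fin p) (Fin p) ℝ} (hA : ∀ n, IsUnit (A n))
    (h : KinSim A B) : SSpec A = SSpec B := by
  ext μ
  refine and_congr_right fun hμ => not_congr ((h.smul μ⁻¹).expDich_iff fun n => ?_)
  exact (hA n).smul_of_ne_zero (inv_ne_zero hμ.ne')

lemma SSpec_subset_Iio_of_expDichWith_one (hB : ∀ n, IsUnit (B n)) (h : ExpDichWith B 1) :
    SSpec B ⊆ Iio 1 := fun _ ⟨hμ, hnd⟩ => not_le.mp fun hμ₁ =>
  hnd (h.smul_of_le_one hB (inv_pos.mpr hμ) (inv_le_one_of_one_le₀ hμ₁)).expDich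

lemma SSpec_subset_Ioi_of_expDichWith_zero (hB : ∀ n, IsUnit (B n)) (h : ExpDichWith B 0) :
    SSpec B ⊆ Ioi 1 := fun _ ⟨hμ, hnd⟩ => not_le.mp fun hμ₁ =>
  hnd (h.smul_of_one_le hB ((one_le_inv₀ hμ).mpr hμ₁)).expDich

variable (e : Fin p ≃ Fin q ⊕ Fin r) {B₁ : ℤ → Matrix (Fin q) (Fin q) ℝ}
  {B₂ : ℤ → Matrix (Fin r) (Fin r) ℝ}

lemma expDich_smul_diagBlocks_iff_left (hB₁ : ∀ n, IsUnit (B₁ n)) (hB₂ : ∀ n, IsUnit (B₂ n))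
    (h₂ : ExpDichWith B₂ 0) {μ : ℝ} (hμ : 0 < μ) (hμ₁ : μ ≤ 1) :
    ExpDich (fun n => μ⁻¹ • diagBlocks e (B₁ n) (B₂ n)) ↔ ExpDich (fun n => μ⁻¹ • B₁ n) := by
  have hμ' : μ⁻¹ ≠ 0 := inv_ne_zero hμ.ne'
  simp only [smul_diagBlocks]
  exact expDich_diagBlocks_iff_left e (fun n => (hB₁ n).smul_of_ne_zero hμ')
    (fun n => (hB₂ n).smul_of_ne_zero hμ') (h₂.smul_of_one_le hB₂ ((one_le_inv₀ hμ).mpr hμ₁))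

lemma expDich_smul_diagBlocks_iff_right (hB₁ : ∀ n, IsUnit (B₁ n)) (hB₂ : ∀ n, IsUnit (B₂ n))
    (h₁ : ExpDichWith B₁ 1) {μ : ℝ} (hμ₁ : 1 ≤ μ) :
    ExpDich (fun n => μ⁻¹ • diagBlocks e (B₁ n) (B₂ n)) ↔ ExpDich (fun n => μ⁻¹ • B₂ n) := by
  have hμ : 0 < μ := zero_lt_one.trans_le hμ₁
  have hμ' : μ⁻¹ ≠ 0 := inv_ne_zero hμ.ne'
  simp only [smul_diagBlocks]
  exact expDich_diagBlocks_iff_right e (fun n => (hB₁ n).smul_of_ne_zero hμ')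
    (fun n => (hB₂ n).smul_of_ne_zero hμ')
    (h₁.smul_of_le_one hB₁ (inv_pos.mpr hμ) (inv_le_one_of_one_le₀ hμ₁))

lemma SSpec_diagBlocks_inter_Iio (hB₁ : ∀ n, IsUnit (B₁ n)) (hB₂ : ∀ n, IsUnit (B₂ n))
    (h₁ : ExpDichWith B₁ 1) (h₂ : ExpDichWith B₂ 0) :
    SSpec (fun n => diagBlocks e (B₁ n) (B₂ n)) ∩ Iio 1 = SSpec B₁ := by
  ext μ
  constructor
  · rintro ⟨⟨hμ, hnd⟩, hμ₁⟩
    exact ⟨hμ, by rwa [← expDich_smul_diagBlocks_iff_left e hB₁ hB₂ h₂ hμ hμ₁.le]⟩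
  · intro hμ
    have hμ₁ : μ < 1 := SSpec_subset_Iio_of_expDichWith_one hB₁ h₁ hμ
    exact ⟨⟨hμ.1, by rw [expDich_smul_diagBlocks_iff_left e hB₁ hB₂ h₂ hμ.1 hμ₁.le]; exact hμ.2⟩,
      hμ₁⟩

lemma SSpec_diagBlocks_inter_Ioi (hB₁ : ∀ n, IsUnit (B₁ n)) (hB₂ : ∀ n, IsUnit (B₂ n))
    (h₁ : ExpDichWith B₁ 1) (h₂ : ExpDichWith B₂ 0) :
    SSpec (fun n => diagBlocks e (B₁ n) (B₂ n)) ∩ Ioi 1 = SSpec B₂ := by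
  ext μ
  constructor
  · rintro ⟨⟨hμ, hnd⟩, hμ₁⟩
    exact ⟨hμ, by rwa [← expDich_smul_diagBlocks_iff_right e hB₁ hB₂ h₁ hμ₁.le]⟩
  · intro hμ
    have hμ₁ : 1 < μ := SSpec_subset_Ioi_of_expDichWith_zero hB₂ h₂ hμ
    exact ⟨⟨hμ.1, by rw [expDich_smul_diagBlocks_iff_right e hB₁ hB₂ h₁ hμ₁.le]; exact hμ.2⟩, hμ₁⟩

end Spectrum

section Intervals

variable {ℓ : ℕ} {a b : Fin ℓ → ℝ} {lam : ℝ} {j k : Fin ℓ}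

lemma iUnion_Icc_inter_Iio_of_mem_gap (hab : ∀ i, a i ≤ b i)
    (hord : ∀ i j : Fin ℓ, i < j → b i < a j) (hjk : (k : ℕ) = j + 1)
    (hlam : lam ∈ Ioo (b j) (a k)) :
    (⋃ i, Icc (a i) (b i)) ∩ Iio lam = ⋃ i : Fin ℓ, ⋃ _ : (i : ℕ) < k, Icc (a i) (b i) := by
  have ha : StrictMono a := fun i i' h => (hab i).trans_lt (hord i i' h)
  have hb : StrictMono b := fun i i' h => (hord i i' h).trans_le (hab i')
  ext μ
  simp only [mem_inter_iff, mem_iUnion, mem_Icc, mem_Iio, exists_prop]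
  constructor
  · rintro ⟨⟨i, hai, hib⟩, hμ⟩
    refine ⟨i, not_le.mp fun hki => ?_, hai, hib⟩
    linarith [ha.monotone (show k ≤ i from hki), hlam.2]
  · rintro ⟨i, hi, hai, hib⟩
    exact ⟨⟨i, hai, hib⟩, by linarith [hb.monotone (show i ≤ j by omega), hlam.1]⟩

lemma iUnion_Icc_inter_Ioi_of_mem_gap (hab : ∀ i, a i ≤ b i)
    (hord : ∀ i j : Fin ℓ, i < j → b i < a j) (hjk : (k : ℕ) = j + 1) (hk : ∀ i, i ≤ k)
    (hlam : lam ∈ Ioo (b j) (a k)) :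
    (⋃ i, Icc (a i) (b i)) ∩ Ioi lam = Icc (a k) (b k) := by
  have hb : StrictMono b := fun i i' h => (hord i i' h).trans_le (hab i')
  ext μ
  simp only [mem_inter_iff, mem_iUnion, mem_Icc, mem_Ioi]
  constructor
  · rintro ⟨⟨i, hai, hib⟩, hμ⟩
    have hik : ¬ i < k := fun hik => by
      linarith [hb.monotone (show i ≤ j by omega), hlam.1]
    obtain rfl : i = k := (hk i).antisymm (not_lt.mp hik)
    exact ⟨hai, hib⟩
  · rintro ⟨hak, hbk⟩
    exact ⟨⟨k, hak, hbk⟩, hlam.2.trans_le hak⟩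

end Intervals

/-- Spectra of the two blocks in the block-diagonalization at a gap point λ in the last
spectral gap: the first block carries the first ℓ-1 spectral intervals and the second
block carries the last one. -/
theorem block_spectra (ℓ : ℕ) (hℓ : 2 ≤ ℓ) (a b : Fin ℓ → ℝ)
    (hpos : ∀ i, 0 < a i) (hab : ∀ i, a i ≤ b i)
    (hord : ∀ i j : Fin ℓ, i < j → b i < a j)
    (A : ℤ → Matrix (Fin d) (Fin d) ℝ)
    (hA : ∀ n, IsUnit (A n))
    (hspec : SSpec A = ⋃ i : Fin ℓ, Set.Icc (a i) (b i))
    (lam : ℝ)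
    (hlam : lam ∈ Set.Ioo (b ⟨ℓ - 2, by omega⟩) (a ⟨ℓ - 1, by omega⟩))
    (m : ℕ) (hsum : d = m + (d - m))
    (A1 : ℤ → Matrix (Fin m) (Fin m) ℝ)
    (A2 : ℤ → Matrix (Fin (d - m)) (Fin (d - m)) ℝ)
    (hsim : KinSim (fun n => lam⁻¹ • A n)
      (fun n => (Matrix.fromBlocks (A1 n) 0 0 (A2 n)).submatrix
        ((finCongr hsum).trans finSumFinEquiv.symm)
        ((finCongr hsum).trans finSumFinEquiv.symm)))
    (hA1 : ExpDichWith A1 1) (hA2 : ExpDichWith A2 0) :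
    SSpec (fun n => lam • A1 n) =
      (⋃ i : Fin ℓ, ⋃ _ : (i : ℕ) < ℓ - 1, Set.Icc (a i) (b i)) ∧
    SSpec (fun n => lam • A2 n) =
      Set.Icc (a ⟨ℓ - 1, by omega⟩) (b ⟨ℓ - 1, by omega⟩) := by
  set e : Fin d ≃ Fin m ⊕ Fin (d - m) := (finCongr hsum).trans finSumFinEquiv.symm
  have hlam₀ : 0 < lam := ((hpos _).trans_le (hab _)).trans hlam.1
  have hA' (n : ℤ) : IsUnit (lam⁻¹ • A n) := (hA n).smul_of_ne_zero (inv_ne_zero hlam₀.ne')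
  have hblocks (n : ℤ) : IsUnit (A1 n) ∧ IsUnit (A2 n) :=
    (isUnit_diagBlocks_iff e).mp (hsim.isUnit hA' n)
  have hdiag : SSpec (fun n => diagBlocks e (A1 n) (A2 n)) = lam⁻¹ • SSpec A :=
    (hsim.SSpec_eq hA').symm.trans (SSpec_smul (inv_pos.mpr hlam₀))
  have h₁ : SSpec (fun n => lam • A1 n) = SSpec A ∩ Iio lam := by
    rw [SSpec_smul hlam₀, ← SSpec_diagBlocks_inter_Iio e (fun n => (hblocks n).1)
      (fun n => (hblocks n).2) hA1 hA2, hdiag, smul_set_inter₀ hlam₀.ne',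
      smul_inv_smul₀ hlam₀.ne', LinearOrderedField.smul_Iio hlam₀, mul_one]
  have h₂ : SSpec (fun n => lam • A2 n) = SSpec A ∩ Ioi lam := by
    rw [SSpec_smul hlam₀, ← SSpec_diagBlocks_inter_Ioi e (fun n => (hblocks n).1)
      (fun n => (hblocks n).2) hA1 hA2, hdiag, smul_set_inter₀ hlam₀.ne',
      smul_inv_smul₀ hlam₀.ne', LinearOrderedField.smul_Ioi hlam₀, mul_one]
  have hjk : ℓ - 1 = ℓ - 2 + 1 := by omega
  rw [h₁, h₂, hspec]
  exact ⟨iUnion_Icc_inter_Iio_of_mem_gap hab hord hjk hlam,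
    iUnion_Icc_inter_Ioi_of_mem_gap hab hord hjk
      (fun i => Fin.le_def.mpr (show (i : ℕ) ≤ ℓ - 1 by omega)) hlam⟩
end
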